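/- arXiv:1901.09246 — 7 statements merged into one kernel-verified Lean document; each statement's English description precedes it below -/
import Mathlib

section
/- Let 0 < α < 1, T > 0, and let f ∈ C¹([0,T]) be monotone (either nondecreasing or nonincreasing on [0,T]). Then for every t ∈ (0,T], 2 f(t) ∂^α_{+0,t} f(t) ≥ ∂^α_{+0,t}(f²)(t), where f² denotes the function s ↦ f(s)². -/
open Set MeasureTheory Filter

/-- Caputo fractional derivative of order `α` at base point `0`. -/
noncomputable def caputo (α : ℝ) (f : ℝ → ℝ) (t : ℝ) : ℝ :=
  (1 / Real.Gamma (1 - α)) * ∫ s in (0:ℝ)..t, (t - s) ^ (-α) * deriv f s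

/-! Writing `2 f(t) ∂^α f(t) - ∂^α (f²)(t)` as one Caputo integral, its integrand is
`2 (t - s)^(-α) (f(t) - f(s)) f'(s)`. For monotone `f` the increment `f(t) - f(s)`, `s ≤ t`, has
the sign of `f'(s)`, so the integrand is nonnegative. -/

lemma sub_mul_deriv_nonneg_of_monotoneOn_or_antitoneOn {f : ℝ → ℝ} {a b s : ℝ} (hab : a < b)
    (hf : MonotoneOn f (Icc a b) ∨ AntitoneOn f (Icc a b)) (hs : s ∈ Icc a b)
    (hd : DifferentiableAt ℝ f s) : 0 ≤ (f b - f s) * deriv f s := by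
  have hb : b ∈ Icc a b := right_mem_Icc.mpr hab.le
  rw [← hd.derivWithin (uniqueDiffOn_Icc hab s hs)]
  rcases hf with hf | hf
  · exact mul_nonneg (sub_nonneg.mpr (hf hs hb hs.2)) hf.derivWithin_nonneg
  · exact mul_nonneg_of_nonpos_of_nonpos (sub_nonpos.mpr (hf hs hb hs.2)) hf.derivWithin_nonpos

lemma caputo_const_mul (α c : ℝ) (f : ℝ → ℝ) (t : ℝ) :
    caputo α (fun s => c * f s) t = c * caputo α f t := by
  simp only [caputo, deriv_const_mul_field', mul_left_comm _ c, intervalIntegral.integral_const_mul]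

lemma intervalIntegrable_sub_rpow_neg_mul {α t : ℝ} {g : ℝ → ℝ} (hα : α < 1) (ht : 0 ≤ t)
    (hg : ContinuousOn g (Icc 0 t)) :
    IntervalIntegrable (fun s => (t - s) ^ (-α) * g s) volume 0 t := by
  have hker : IntervalIntegrable (fun s => (t - s) ^ (-α)) volume 0 t := by
    simpa using
      ((intervalIntegral.intervalIntegrable_rpow' (by linarith) :
        IntervalIntegrable (fun x : ℝ => x ^ (-α)) volume 0 t).comp_sub_left t).symm
  exact hker.mul_continuousOn (by rwa [uIcc_of_le ht])

lemma caputo_mono {α t : ℝ} {f g : ℝ → ℝ} (hα : α < 1) (ht : 0 ≤ t)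
    (hf : ContinuousOn (deriv f) (Icc 0 t)) (hg : ContinuousOn (deriv g) (Icc 0 t))
    (hfg : ∀ s ∈ Icc 0 t, deriv f s ≤ deriv g s) : caputo α f t ≤ caputo α g t := by
  have hΓ : 0 ≤ 1 / Real.Gamma (1 - α) := by
    have := Real.Gamma_pos_of_pos (sub_pos.mpr hα)
    positivity
  refine mul_le_mul_of_nonneg_left (intervalIntegral.integral_mono_on ht
    (intervalIntegrable_sub_rpow_neg_mul hα ht hf) (intervalIntegrable_sub_rpow_neg_mul hα ht hg)
    fun s hs => ?_) hΓ
  exact mul_le_mul_of_nonneg_left (hfg s hs) (Real.rpow_nonneg (sub_nonneg.mpr hs.2) _)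

theorem caputo_sq_inequality_general (α T : ℝ) (hα : 0 < α ∧ α < 1) (f : ℝ → ℝ)
    (hd : ∀ t ∈ Set.Icc (0:ℝ) T, DifferentiableAt ℝ f t)
    (hd' : ContinuousOn (deriv f) (Set.Icc 0 T))
    (hmono : MonotoneOn f (Set.Icc 0 T) ∨ AntitoneOn f (Set.Icc 0 T)) :
    ∀ t ∈ Set.Ioc (0:ℝ) T, caputo α (fun s => (f s) ^ 2) t ≤ 2 * f t * caputo α f t := by
  rintro t ⟨ht, htT⟩
  have hsub : Icc 0 t ⊆ Icc 0 T := Icc_subset_Icc_right htT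
  have hdt : ∀ s ∈ Icc 0 t, DifferentiableAt ℝ f s := fun s hs => hd s (hsub hs)
  have hd't : ContinuousOn (deriv f) (Icc 0 t) := hd'.mono hsub
  have hsq : EqOn (deriv fun s => f s ^ 2) (fun s => 2 * f s * deriv f s) (Icc 0 t) :=
    fun s hs => by simp [deriv_fun_pow (hdt s hs), mul_comm]
  rw [← caputo_const_mul]
  refine caputo_mono hα.2 ht.le ?_ (by simpa only [deriv_const_mul_field'] using hd't.const_mul (2 * f t)) fun s hs => ?_
  · refine ContinuousOn.congr ?_ hsq
    exact (continuousOn_const.mul fun s hs => (hdt s hs).continuousAt.continuousWithinAt).mul hd't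
  · have hkey := sub_mul_deriv_nonneg_of_monotoneOn_or_antitoneOn ht
      (hmono.imp (·.mono hsub) (·.mono hsub)) hs (hdt s hs)
    rw [hsq hs, deriv_const_mul_field]
    nlinarith

/-- For monotone C1 functions f on [0,T]: 2 f(t) ∂^α f(t) ≥ ∂^α (f²)(t) on (0,T]. -/
theorem caputo_sq_inequality (α T : ℝ) (hα : 0 < α ∧ α < 1) (hT : 0 < T) (f : ℝ → ℝ)
    (hd : ∀ t ∈ Set.Icc (0:ℝ) T, DifferentiableAt ℝ f t)
    (hd' : ContinuousOn (deriv f) (Set.Icc 0 T))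
    (hmono : MonotoneOn f (Set.Icc 0 T) ∨ AntitoneOn f (Set.Icc 0 T)) :
    ∀ t ∈ Set.Ioc (0:ℝ) T, caputo α (fun s => (f s) ^ 2) t ≤ 2 * f t * caputo α f t :=
  caputo_sq_inequality_general α T hα f hd hd' hmono
end

section
/- Let 0 < α < 1 and let f ∈ C¹((0,T)) ∩ C([0,T]) be such that its Caputo fractional derivative of order α is defined at t₀, where t₀ ∈ (0,T] is a point at which f attains its maximum over the interval [0,T]. Then ∂^α_{+0,t} f(t₀) ≥ 0. -/
open Set MeasureTheory Filter
open scoped Topology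

noncomputable def caputoIntegral (α t₀ : ℝ) (f : ℝ → ℝ) (x : ℝ) : ℝ :=
  ∫ s in (0:ℝ)..x, (t₀ - s) ^ (-α) * deriv f s

noncomputable def caputoIntegralAddBoundary (α t₀ : ℝ) (f : ℝ → ℝ) (x : ℝ) : ℝ :=
  caputoIntegral α t₀ f x + (t₀ - x) ^ (-α) * (f t₀ - f x)

/-- `(t₀ - x)^α (caputoIntegralAddBoundary α t₀ f x - c)` (`caputoRescaled_eq`), in a form that
stays continuous at `x = t₀`. -/
noncomputable def caputoRescaled (α t₀ c : ℝ) (f : ℝ → ℝ) (x : ℝ) : ℝ :=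
  (t₀ - x) ^ α * (caputoIntegral α t₀ f x - c) + (f t₀ - f x)

theorem hasDerivAt_const_sub_rpow {t₀ x : ℝ} (p : ℝ) (hx : x < t₀) :
    HasDerivAt (fun s => (t₀ - s) ^ p) (-(p * (t₀ - x) ^ (p - 1))) x := by
  simpa using ((hasDerivAt_id x).const_sub t₀).rpow_const (p := p) (Or.inl (sub_pos.2 hx).ne')

theorem StrictMonoOn.lt_of_tendsto_nhdsLT {ψ : ℝ → ℝ} {a b L x : ℝ}
    (hψ : StrictMonoOn ψ (Ioo a b)) (hlim : Tendsto ψ (𝓝[<] b) (𝓝 L)) (hx : x ∈ Ioo a b) :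
    ψ x < L := by
  obtain ⟨y, hxy, hyb⟩ := exists_between hx.2
  have hy : y ∈ Ioo a b := ⟨hx.1.trans hxy, hyb⟩
  refine (hψ hx hy hxy).trans_le (ge_of_tendsto hlim ?_)
  filter_upwards [Ioo_mem_nhdsLT hyb] with z hz
  exact hψ.monotoneOn hy ⟨hy.1.trans hz.1, hz.2⟩ hz.1.le

section

variable {α t₀ : ℝ} {f : ℝ → ℝ}

theorem continuousOn_caputoIntegral (ht₀ : 0 ≤ t₀)
    (hint : IntervalIntegrable (fun s => (t₀ - s) ^ (-α) * deriv f s) volume 0 t₀) :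
    ContinuousOn (caputoIntegral α t₀ f) (Icc 0 t₀) := by
  have := intervalIntegral.continuousOn_primitive_interval' hint left_mem_uIcc
  rw [uIcc_of_le ht₀] at this
  exact this

theorem hasDerivAt_caputoIntegral
    (hint : IntervalIntegrable (fun s => (t₀ - s) ^ (-α) * deriv f s) volume 0 t₀)
    (hd' : ContinuousOn (deriv f) (Ioo 0 t₀)) {x : ℝ} (hx : x ∈ Ioo 0 t₀) :
    HasDerivAt (caputoIntegral α t₀ f) ((t₀ - x) ^ (-α) * deriv f x) x := by
  have hcont : ContinuousOn (fun s => (t₀ - s) ^ (-α) * deriv f s) (Ioo 0 t₀) :=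
    ((continuousOn_const.sub continuousOn_id).rpow_const
      fun s hs => Or.inl (sub_pos.2 hs.2).ne').mul hd'
  refine intervalIntegral.integral_hasDerivAt_right (hint.mono_set ?_)
    (hcont.stronglyMeasurableAtFilter isOpen_Ioo x hx) (hcont.continuousAt (isOpen_Ioo.mem_nhds hx))
  rw [uIcc_of_le hx.1.le, uIcc_of_le (hx.1.trans hx.2).le]
  exact Icc_subset_Icc_right hx.2.le

theorem hasDerivAt_caputoIntegralAddBoundary
    (hint : IntervalIntegrable (fun s => (t₀ - s) ^ (-α) * deriv f s) volume 0 t₀)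
    (hd : ∀ x ∈ Ioo 0 t₀, DifferentiableAt ℝ f x) (hd' : ContinuousOn (deriv f) (Ioo 0 t₀))
    {x : ℝ} (hx : x ∈ Ioo 0 t₀) :
    HasDerivAt (caputoIntegralAddBoundary α t₀ f) (α * (t₀ - x) ^ (-α - 1) * (f t₀ - f x)) x := by
  refine ((hasDerivAt_caputoIntegral hint hd' hx).add
    ((hasDerivAt_const_sub_rpow (-α) hx.2).mul ((hd x hx).hasDerivAt.const_sub (f t₀)))).congr_deriv ?_
  ring

theorem monotoneOn_caputoIntegralAddBoundary (hα : 0 ≤ α)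
    (hint : IntervalIntegrable (fun s => (t₀ - s) ^ (-α) * deriv f s) volume 0 t₀)
    (hd : ∀ x ∈ Ioo 0 t₀, DifferentiableAt ℝ f x) (hd' : ContinuousOn (deriv f) (Ioo 0 t₀))
    (hmax : ∀ x ∈ Ioo 0 t₀, f x ≤ f t₀) :
    MonotoneOn (caputoIntegralAddBoundary α t₀ f) (Ioo 0 t₀) := by
  have hderiv := fun x (hx : x ∈ Ioo 0 t₀) => hasDerivAt_caputoIntegralAddBoundary hint hd hd' hx
  refine monotoneOn_of_deriv_nonneg (convex_Ioo 0 t₀)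
    (fun x hx => (hderiv x hx).continuousAt.continuousWithinAt) ?_ ?_ <;> rw [interior_Ioo]
  · exact fun x hx => (hderiv x hx).differentiableAt.differentiableWithinAt
  · intro x hx
    rw [(hderiv x hx).deriv]
    exact mul_nonneg (mul_nonneg hα (Real.rpow_nonneg (sub_pos.2 hx.2).le _))
      (sub_nonneg.2 (hmax x hx))

theorem caputoRescaled_eq {c x : ℝ} (hx : x < t₀) :
    caputoRescaled α t₀ c f x = (t₀ - x) ^ α * (caputoIntegralAddBoundary α t₀ f x - c) := by
  have hpow : (t₀ - x) ^ α * (t₀ - x) ^ (-α) = 1 := by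
    rw [← Real.rpow_add (sub_pos.2 hx), add_neg_cancel, Real.rpow_zero]
  rw [caputoRescaled, caputoIntegralAddBoundary]
  linear_combination -(f t₀ - f x) * hpow

theorem hasDerivAt_caputoRescaled
    (hint : IntervalIntegrable (fun s => (t₀ - s) ^ (-α) * deriv f s) volume 0 t₀)
    (hd : ∀ x ∈ Ioo 0 t₀, DifferentiableAt ℝ f x) (hd' : ContinuousOn (deriv f) (Ioo 0 t₀))
    (c : ℝ) {x : ℝ} (hx : x ∈ Ioo 0 t₀) :
    HasDerivAt (caputoRescaled α t₀ c f)
      (α * (t₀ - x) ^ (α - 1) * (c - caputoIntegral α t₀ f x)) x := by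
  have hpow : (t₀ - x) ^ α * (t₀ - x) ^ (-α) = 1 := by
    rw [← Real.rpow_add (sub_pos.2 hx.2), add_neg_cancel, Real.rpow_zero]
  refine (((hasDerivAt_const_sub_rpow α hx.2).mul
    ((hasDerivAt_caputoIntegral hint hd' hx).sub_const c)).add
    ((hd x hx).hasDerivAt.const_sub (f t₀))).congr_deriv ?_
  linear_combination deriv f x * hpow

theorem tendsto_caputoRescaled_nhdsLT (hα : 0 < α) (ht₀ : 0 < t₀)
    (hint : IntervalIntegrable (fun s => (t₀ - s) ^ (-α) * deriv f s) volume 0 t₀)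
    (hc : ContinuousOn f (Icc 0 t₀)) (c : ℝ) :
    Tendsto (caputoRescaled α t₀ c f) (𝓝[<] t₀) (𝓝 0) := by
  have hleft : 𝓝[<] t₀ ≤ 𝓝[Icc 0 t₀] t₀ := nhdsWithin_le_of_mem (Icc_mem_nhdsLT ht₀)
  have hP_lim := ((continuousOn_caputoIntegral ht₀.le hint) t₀ ⟨ht₀.le, le_rfl⟩).tendsto
  have hf_lim := (hc t₀ ⟨ht₀.le, le_rfl⟩).tendsto
  have hpow_lim : Tendsto (fun x => (t₀ - x) ^ α) (𝓝[<] t₀) (𝓝 ((t₀ - t₀) ^ α)) :=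
    ((continuous_const.sub continuous_id).continuousAt.rpow_const
      (Or.inr hα.le)).tendsto.mono_left nhdsWithin_le_nhds
  have := (hpow_lim.mul ((hP_lim.mono_left hleft).sub_const c)).add
    ((tendsto_const_nhds (x := f t₀)).sub (hf_lim.mono_left hleft))
  rwa [sub_self, Real.zero_rpow hα.ne', zero_mul, sub_self, add_zero] at this

theorem caputoIntegralAddBoundary_le_caputoIntegral (hα : 0 < α)
    (hint : IntervalIntegrable (fun s => (t₀ - s) ^ (-α) * deriv f s) volume 0 t₀)
    (hd : ∀ x ∈ Ioo 0 t₀, DifferentiableAt ℝ f x) (hd' : ContinuousOn (deriv f) (Ioo 0 t₀))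
    (hc : ContinuousOn f (Icc 0 t₀)) (hmax : ∀ x ∈ Ioo 0 t₀, f x ≤ f t₀)
    {x₀ : ℝ} (hx₀ : x₀ ∈ Ioo 0 t₀) :
    caputoIntegralAddBoundary α t₀ f x₀ ≤ caputoIntegral α t₀ f t₀ := by
  set c := caputoIntegralAddBoundary α t₀ f x₀
  have hsub₀ : Ioo x₀ t₀ ⊆ Ioo 0 t₀ := Ioo_subset_Ioo_left hx₀.1.le
  have hnonneg : ∀ x ∈ Ioo x₀ t₀, 0 ≤ caputoRescaled α t₀ c f x := fun x hx => by
    rw [caputoRescaled_eq hx.2]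
    exact mul_nonneg (Real.rpow_nonneg (sub_pos.2 hx.2).le _) (sub_nonneg.2
      (monotoneOn_caputoIntegralAddBoundary hα.le hint hd hd' hmax hx₀ (hsub₀ hx) hx.1.le))
  by_contra! hlt
  have hP_lim : Tendsto (caputoIntegral α t₀ f) (𝓝[<] t₀) (𝓝 (caputoIntegral α t₀ f t₀)) :=
    ((continuousOn_caputoIntegral (hx₀.1.trans hx₀.2).le hint) t₀
      ⟨(hx₀.1.trans hx₀.2).le, le_rfl⟩).tendsto.mono_left
      (nhdsWithin_le_of_mem (Icc_mem_nhdsLT (hx₀.1.trans hx₀.2)))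
  obtain ⟨l, hl, hsub⟩ := mem_nhdsLT_iff_exists_Ioo_subset.1
    ((hP_lim.eventually (gt_mem_nhds hlt)).and (Ioo_mem_nhdsLT hx₀.2))
  have hderiv := fun x (hx : x ∈ Ioo l t₀) => hasDerivAt_caputoRescaled hint hd hd' c
    (hsub₀ (hsub hx).2)
  have hmono : StrictMonoOn (caputoRescaled α t₀ c f) (Ioo l t₀) := by
    refine strictMonoOn_of_hasDerivWithinAt_pos (convex_Ioo l t₀)
      (f' := fun x => α * (t₀ - x) ^ (α - 1) * (c - caputoIntegral α t₀ f x))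
      (fun x hx => (hderiv x hx).continuousAt.continuousWithinAt) ?_ ?_ <;> rw [interior_Ioo]
    · exact fun x hx => (hderiv x hx).hasDerivWithinAt
    · exact fun x hx => mul_pos (mul_pos hα (Real.rpow_pos_of_pos (sub_pos.2 hx.2) _))
        (sub_pos.2 (hsub hx).1)
  obtain ⟨x, hx⟩ := nonempty_Ioo.2 (mem_Iio.1 hl)
  exact (hnonneg x (hsub hx).2).not_gt (hmono.lt_of_tendsto_nhdsLT
    (tendsto_caputoRescaled_nhdsLT hα (hx₀.1.trans hx₀.2) hint hc c) hx)

theorem rpow_mul_sub_le_caputoIntegral (hα : 0 < α) (ht₀ : 0 < t₀)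
    (hint : IntervalIntegrable (fun s => (t₀ - s) ^ (-α) * deriv f s) volume 0 t₀)
    (hd : ∀ x ∈ Ioo 0 t₀, DifferentiableAt ℝ f x) (hd' : ContinuousOn (deriv f) (Ioo 0 t₀))
    (hc : ContinuousOn f (Icc 0 t₀)) (hmax : ∀ x ∈ Ioo 0 t₀, f x ≤ f t₀) :
    t₀ ^ (-α) * (f t₀ - f 0) ≤ caputoIntegral α t₀ f t₀ := by
  have hP_lim : Tendsto (caputoIntegral α t₀ f) (𝓝[>] 0) (𝓝 0) := by
    have := ((continuousOn_caputoIntegral ht₀.le hint) 0 ⟨le_rfl, ht₀.le⟩).tendsto.mono_left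
      (nhdsWithin_le_of_mem (Icc_mem_nhdsGT ht₀))
    rwa [caputoIntegral, intervalIntegral.integral_same] at this
  have hf_lim : Tendsto f (𝓝[>] 0) (𝓝 (f 0)) :=
    (hc 0 ⟨le_rfl, ht₀.le⟩).tendsto.mono_left (nhdsWithin_le_of_mem (Icc_mem_nhdsGT ht₀))
  have hpow_lim : Tendsto (fun x => (t₀ - x) ^ (-α)) (𝓝[>] 0) (𝓝 ((t₀ - 0) ^ (-α))) :=
    ((continuous_const.sub continuous_id).continuousAt.rpow_const
      (Or.inl (by simpa using ht₀.ne'))).tendsto.mono_left nhdsWithin_le_nhds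
  have hD_lim : Tendsto (caputoIntegralAddBoundary α t₀ f) (𝓝[>] 0)
      (𝓝 (t₀ ^ (-α) * (f t₀ - f 0))) := by
    have := hP_lim.add (hpow_lim.mul ((tendsto_const_nhds (x := f t₀)).sub hf_lim))
    rwa [zero_add, sub_zero] at this
  refine le_of_tendsto hD_lim ?_
  filter_upwards [Ioo_mem_nhdsGT ht₀] with x hx
  exact caputoIntegralAddBoundary_le_caputoIntegral hα hint hd hd' hc hmax hx

end

theorem caputo_nonneg_at_max_general (α T t₀ : ℝ) (hα : 0 < α ∧ α < 1) (f : ℝ → ℝ)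
    (hc : ContinuousOn f (Set.Icc 0 T))
    (hd : ∀ t ∈ Set.Ioo (0:ℝ) T, DifferentiableAt ℝ f t)
    (hd' : ContinuousOn (deriv f) (Set.Ioo 0 T))
    (ht₀ : t₀ ∈ Set.Ioc (0:ℝ) T)
    (hint : IntervalIntegrable (fun s => (t₀ - s) ^ (-α) * deriv f s) MeasureTheory.volume 0 t₀)
    (hmax : ∀ t ∈ Set.Icc (0:ℝ) T, f t ≤ f t₀) :
    0 ≤ caputo α f t₀ := by
  obtain ⟨hα₀, hα₁⟩ := hα
  obtain ⟨ht₀, htT⟩ := ht₀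
  have hIcc : Icc 0 t₀ ⊆ Icc 0 T := Icc_subset_Icc_right htT
  have hIoo : Ioo 0 t₀ ⊆ Ioo 0 T := Ioo_subset_Ioo_right htT
  have hbound := rpow_mul_sub_le_caputoIntegral hα₀ ht₀ hint (fun x hx => hd x (hIoo hx))
    (hd'.mono hIoo) (hc.mono hIcc) (fun x hx => hmax x (hIcc (Ioo_subset_Icc_self hx)))
  have hf₀ : f 0 ≤ f t₀ := hmax 0 ⟨le_rfl, ht₀.le.trans htT⟩
  have hΓ : 0 < Real.Gamma (1 - α) := Real.Gamma_pos_of_pos (by linarith)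
  exact mul_nonneg (one_div_nonneg.2 hΓ.le)
    ((mul_nonneg (Real.rpow_nonneg ht₀.le _) (sub_nonneg.2 hf₀)).trans hbound)

/-- Caputo derivative at a maximum point is nonnegative. -/
theorem caputo_nonneg_at_max (α T t₀ : ℝ) (hα : 0 < α ∧ α < 1) (hT : 0 < T) (f : ℝ → ℝ)
    (hc : ContinuousOn f (Set.Icc 0 T))
    (hd : ∀ t ∈ Set.Ioo (0:ℝ) T, DifferentiableAt ℝ f t)
    (hd' : ContinuousOn (deriv f) (Set.Ioo 0 T))
    (ht₀ : t₀ ∈ Set.Ioc (0:ℝ) T)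
    (hint : IntervalIntegrable (fun s => (t₀ - s) ^ (-α) * deriv f s) MeasureTheory.volume 0 t₀)
    (hmax : ∀ t ∈ Set.Icc (0:ℝ) T, f t ≤ f t₀) :
    0 ≤ caputo α f t₀ :=
  caputo_nonneg_at_max_general α T t₀ hα f hc hd hd' ht₀ hint hmax
end

section
/- Let 0 < α < 1 and let f ∈ C¹((0,T)) ∩ C([0,T]) be such that its Caputo fractional derivative of order α is defined at t₀, where t₀ ∈ (0,T] is a point at which f attains its minimum over the interval [0,T]. Then ∂^α_{+0,t} f(t₀) ≤ 0. -/
open Set MeasureTheory Filter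

/-!
Split `(t - s) ^ (-α) = ((t - s) ^ (-α) - t ^ (-α)) + t ^ (-α)`. Against `f'` on `[0, t]` the
constant part gives `t ^ (-α) * (f t - f 0) ≤ 0`. For the other part write
`(t - s) ^ (-α) - t ^ (-α) = ∫₀ˢ α (t - r) ^ (-α - 1) dr` and exchange the integrals over the
triangle `0 < r < s < t`: this gives `∫₀ᵗ α (t - r) ^ (-α - 1) (f t - f r) dr ≤ 0`. Since the
kernel is nonnegative, absolute integrability on the triangle reduces to integrability of
`((t - s) ^ (-α) - t ^ (-α)) f'(s)`, which follows from the integrability of `(t - s) ^ (-α) f'(s)`.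
-/

theorem continuousOn_sub_rpow (t p : ℝ) : ContinuousOn (fun r : ℝ => (t - r) ^ p) (Iio t) :=
  (continuousOn_const.sub continuousOn_id).rpow_const fun _ hr => Or.inl (sub_pos.2 hr).ne'

theorem integral_mul_sub_rpow_neg_sub_one {α t a s : ℝ} (ha : a < t) (hs : s < t) :
    ∫ r in a..s, α * (t - r) ^ (-α - 1) = (t - s) ^ (-α) - (t - a) ^ (-α) := by
  have hsub : uIcc a s ⊆ Iio t := fun r hr => hr.2.trans_lt (max_lt ha hs)
  refine intervalIntegral.integral_eq_sub_of_hasDerivAt (f := fun r => (t - r) ^ (-α))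
    (fun r hr => ?_)
    ((continuousOn_const.mul (continuousOn_sub_rpow t (-α - 1))).mono hsub).intervalIntegrable
  have hderiv := ((hasDerivAt_id r).const_sub t).rpow_const (p := -α)
    (Or.inl (sub_pos.2 (hsub hr)).ne')
  exact hderiv.congr_deriv (by simp only [id]; ring)

theorem IntervalIntegrable.of_sub_rpow_neg_mul {α a t : ℝ} {g : ℝ → ℝ} (hα : 0 ≤ α) (hat : a ≤ t)
    (h : IntervalIntegrable (fun s => (t - s) ^ (-α) * g s) volume a t) :
    IntervalIntegrable g volume a t := by
  have hcont : ContinuousOn (fun s : ℝ => (t - s) ^ α) (uIcc a t) :=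
    (continuousOn_const.sub continuousOn_id).rpow_const fun _ _ => Or.inr hα
  refine (h.continuousOn_mul hcont).congr_ae ?_
  filter_upwards [ae_restrict_of_ae (Measure.ae_ne volume t), ae_restrict_mem measurableSet_uIoc]
    with s hst hs
  rw [uIoc_of_le hat] at hs
  have hpos : 0 < t - s := sub_pos.2 (lt_of_le_of_ne hs.2 hst)
  rw [← mul_assoc, Real.rpow_neg hpos.le, mul_inv_cancel₀ (Real.rpow_pos_of_pos hpos α).ne', one_mul]

theorem integral_Ioo_indicator_Iio {a b s : ℝ} (f : ℝ → ℝ) (has : a ≤ s) (hsb : s ≤ b) :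
    ∫ r in Ioo a b, (Iio s).indicator f r = ∫ r in a..s, f r := by
  rw [setIntegral_indicator measurableSet_Iio, Ioo_inter_Iio, min_eq_right hsb,
    intervalIntegral.integral_of_le has, integral_Ioc_eq_integral_Ioo]

theorem integral_Ioo_indicator_Ioi {a b r : ℝ} (f : ℝ → ℝ) (har : a ≤ r) (hrb : r ≤ b) :
    ∫ s in Ioo a b, (Ioi r).indicator f s = ∫ s in r..b, f s := by
  rw [setIntegral_indicator measurableSet_Ioi, Ioo_inter_Ioi, max_eq_right har,
    intervalIntegral.integral_of_le hrb, integral_Ioc_eq_integral_Ioo]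

section TriangleFubini

variable {a b : ℝ} {k K g : ℝ → ℝ}

theorem integrable_indicator_lt_mul (hk_nonneg : ∀ r ∈ Ioo a b, 0 ≤ k r)
    (hk : ∀ s ∈ Ioo a b, IntervalIntegrable k volume a s)
    (hK : ∀ s ∈ Ioo a b, ∫ r in a..s, k r = K s)
    (hkm : AEStronglyMeasurable k (volume.restrict (Ioo a b)))
    (hgm : AEStronglyMeasurable g (volume.restrict (Ioo a b)))
    (hKg : IntervalIntegrable (fun s => K s * g s) volume a b) :
    Integrable ({p : ℝ × ℝ | p.1 < p.2}.indicator fun p => k p.1 * g p.2)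
      ((volume.restrict (Ioo a b)).prod (volume.restrict (Ioo a b))) := by
  set μ := volume.restrict (Ioo a b)
  set F : ℝ × ℝ → ℝ := {p | p.1 < p.2}.indicator fun p => k p.1 * g p.2
  have hF_meas : AEStronglyMeasurable F (μ.prod μ) :=
    (hkm.comp_fst.mul hgm.comp_snd).indicator (measurableSet_lt measurable_fst measurable_snd)
  refine (integrable_prod_iff' hF_meas).2 ⟨?_, ?_⟩
  · filter_upwards [ae_restrict_mem measurableSet_Ioo] with s hs
    have hsection : (fun r => F (r, s)) = (Iio s).indicator fun r => k r * g s := by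
      ext r; simp [F, indicator_apply]
    rw [hsection, integrable_indicator_iff measurableSet_Iio, IntegrableOn,
      Measure.restrict_restrict measurableSet_Iio, inter_comm, Ioo_inter_Iio, min_eq_right hs.2.le]
    exact ((hk s hs).1.mono_set Ioo_subset_Ioc_self).mul_const _
  · refine ((hKg.1.mono_set Ioo_subset_Ioc_self).norm).congr ?_
    filter_upwards [ae_restrict_mem measurableSet_Ioo] with s hs
    have hK_nonneg : 0 ≤ K s := by
      rw [← hK s hs, intervalIntegral.integral_of_le hs.1.le]
      exact setIntegral_nonneg measurableSet_Ioc fun r hr => hk_nonneg r ⟨hr.1, hr.2.trans_lt hs.2⟩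
    have hnorm_section : ∀ᵐ r ∂μ, ‖F (r, s)‖ = (Iio s).indicator (fun r => k r * |g s|) r := by
      filter_upwards [ae_restrict_mem measurableSet_Ioo] with r hr
      by_cases hrs : r < s
      · simp [F, hrs, abs_of_nonneg (hk_nonneg r hr)]
      · simp [F, hrs]
    rw [integral_congr_ae hnorm_section, integral_Ioo_indicator_Iio _ hs.1.le hs.2.le,
      intervalIntegral.integral_mul_const, hK s hs, Real.norm_eq_abs, abs_mul,
      abs_of_nonneg hK_nonneg]

theorem integral_mul_eq_integral_mul_integral (hab : a ≤ b)
    (hk_nonneg : ∀ r ∈ Ioo a b, 0 ≤ k r)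
    (hk : ∀ s ∈ Ioo a b, IntervalIntegrable k volume a s)
    (hK : ∀ s ∈ Ioo a b, ∫ r in a..s, k r = K s)
    (hkm : AEStronglyMeasurable k (volume.restrict (Ioo a b)))
    (hgm : AEStronglyMeasurable g (volume.restrict (Ioo a b)))
    (hKg : IntervalIntegrable (fun s => K s * g s) volume a b) :
    ∫ s in a..b, K s * g s = ∫ r in a..b, k r * ∫ s in r..b, g s := by
  set μ := volume.restrict (Ioo a b)
  set F : ℝ × ℝ → ℝ := {p | p.1 < p.2}.indicator fun p => k p.1 * g p.2
  have hF_int : Integrable F (μ.prod μ) :=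
    integrable_indicator_lt_mul hk_nonneg hk hK hkm hgm hKg
  calc ∫ s in a..b, K s * g s = ∫ s, ∫ r, F (r, s) ∂μ ∂μ := by
        rw [intervalIntegral.integral_of_le hab, integral_Ioc_eq_integral_Ioo]
        refine integral_congr_ae ?_
        filter_upwards [ae_restrict_mem measurableSet_Ioo] with s hs
        have hsection : (fun r => F (r, s)) = (Iio s).indicator fun r => k r * g s := by
          ext r; simp [F, indicator_apply]
        rw [hsection, integral_Ioo_indicator_Iio _ hs.1.le hs.2.le,
          intervalIntegral.integral_mul_const, hK s hs]
    _ = ∫ r, ∫ s, F (r, s) ∂μ ∂μ := (integral_integral_swap (f := fun r s => F (r, s)) hF_int).symm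
    _ = ∫ r in a..b, k r * ∫ s in r..b, g s := by
        rw [intervalIntegral.integral_of_le hab, integral_Ioc_eq_integral_Ioo]
        refine integral_congr_ae ?_
        filter_upwards [ae_restrict_mem measurableSet_Ioo] with r hr
        have hsection : (fun s => F (r, s)) = (Ioi r).indicator fun s => k r * g s := by
          ext s; simp [F, indicator_apply]
        rw [hsection, integral_Ioo_indicator_Ioi _ hr.1.le hr.2.le,
          intervalIntegral.integral_const_mul]

end TriangleFubini

theorem integral_sub_rpow_neg_mul_deriv_nonpos_of_isMinOn {α t : ℝ} {f : ℝ → ℝ} (hα : 0 ≤ α)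
    (ht : 0 < t) (hc : ContinuousOn f (Icc 0 t)) (hd : ∀ s ∈ Ioo 0 t, DifferentiableAt ℝ f s)
    (hint : IntervalIntegrable (fun s => (t - s) ^ (-α) * deriv f s) volume 0 t)
    (hmin : IsMinOn f (Icc 0 t) t) :
    ∫ s in 0..t, (t - s) ^ (-α) * deriv f s ≤ 0 := by
  have hf' : IntervalIntegrable (deriv f) volume 0 t := hint.of_sub_rpow_neg_mul hα ht.le
  have hFTC : ∀ r ∈ Icc 0 t, ∫ s in r..t, deriv f s = f t - f r := fun r hr =>
    intervalIntegral.integral_eq_sub_of_hasDerivAt_of_le hr.2 (hc.mono (Icc_subset_Icc_left hr.1))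
      (fun s hs => (hd s ⟨hr.1.trans_lt hs.1, hs.2⟩).hasDerivAt)
      (hf'.mono_set (uIcc_subset_uIcc_right (by simpa [uIcc_of_le ht.le] using hr)))
  have hdiff : IntervalIntegrable (fun s => ((t - s) ^ (-α) - t ^ (-α)) * deriv f s) volume 0 t := by
    simpa only [sub_mul] using hint.sub (hf'.const_mul (t ^ (-α)))
  have hk_cont : ContinuousOn (fun r => α * (t - r) ^ (-α - 1)) (Iio t) :=
    continuousOn_const.mul (continuousOn_sub_rpow t _)
  have hkernel : ∫ s in 0..t, ((t - s) ^ (-α) - t ^ (-α)) * deriv f s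
      = ∫ r in 0..t, α * (t - r) ^ (-α - 1) * (f t - f r) := by
    rw [integral_mul_eq_integral_mul_integral (k := fun r => α * (t - r) ^ (-α - 1)) ht.le
      (fun r hr => mul_nonneg hα (Real.rpow_nonneg (sub_pos.2 hr.2).le _))
      (fun s hs => (hk_cont.mono fun r hr => hr.2.trans_lt (max_lt ht hs.2)).intervalIntegrable)
      (fun s hs => by rw [integral_mul_sub_rpow_neg_sub_one ht hs.2, sub_zero])
      ((hk_cont.mono fun r hr => hr.2).aestronglyMeasurable measurableSet_Ioo)
      (measurable_deriv f).aestronglyMeasurable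
      hdiff]
    exact intervalIntegral.integral_congr fun r hr => by
      rw [hFTC r (by simpa [uIcc_of_le ht.le] using hr)]
  have hf_sub_nonpos : ∀ r ∈ Icc 0 t, f t - f r ≤ 0 := fun r hr => sub_nonpos.2 (hmin hr)
  calc ∫ s in 0..t, (t - s) ^ (-α) * deriv f s
        = (∫ s in 0..t, ((t - s) ^ (-α) - t ^ (-α)) * deriv f s) +
            t ^ (-α) * ∫ s in 0..t, deriv f s := by
          rw [← intervalIntegral.integral_const_mul,
            ← intervalIntegral.integral_add hdiff (hf'.const_mul _)]
          simp only [sub_mul, sub_add_cancel]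
      _ = (∫ r in 0..t, α * (t - r) ^ (-α - 1) * (f t - f r)) + t ^ (-α) * (f t - f 0) := by
          rw [hkernel, hFTC 0 ⟨le_rfl, ht.le⟩]
      _ ≤ 0 := by
          refine add_nonpos ?_ (mul_nonpos_of_nonneg_of_nonpos (Real.rpow_nonneg ht.le _)
            (hf_sub_nonpos 0 ⟨le_rfl, ht.le⟩))
          rw [← neg_nonneg, ← intervalIntegral.integral_neg]
          exact intervalIntegral.integral_nonneg ht.le fun r hr => neg_nonneg.2 <|
            mul_nonpos_of_nonneg_of_nonpos
              (mul_nonneg hα (Real.rpow_nonneg (sub_nonneg.2 hr.2) _)) (hf_sub_nonpos r hr)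

theorem caputo_nonpos_at_min_general (α T t₀ : ℝ) (hα : 0 < α ∧ α < 1) (f : ℝ → ℝ)
    (hc : ContinuousOn f (Set.Icc 0 T))
    (hd : ∀ t ∈ Set.Ioo (0:ℝ) T, DifferentiableAt ℝ f t)
    (ht₀ : t₀ ∈ Set.Ioc (0:ℝ) T)
    (hint : IntervalIntegrable (fun s => (t₀ - s) ^ (-α) * deriv f s) MeasureTheory.volume 0 t₀)
    (hmin : ∀ t ∈ Set.Icc (0:ℝ) T, f t₀ ≤ f t) :
    caputo α f t₀ ≤ 0 := by
  obtain ⟨ht₀_pos, ht₀_le⟩ := ht₀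
  have hI := integral_sub_rpow_neg_mul_deriv_nonpos_of_isMinOn hα.1.le ht₀_pos
    (hc.mono (Icc_subset_Icc_right ht₀_le)) (fun s hs => hd s ⟨hs.1, hs.2.trans_le ht₀_le⟩) hint
    (isMinOn_iff.2 fun s hs => hmin s ⟨hs.1, hs.2.trans ht₀_le⟩)
  exact mul_nonpos_of_nonneg_of_nonpos
    (one_div_nonneg.2 (Real.Gamma_pos_of_pos (sub_pos.2 hα.2)).le) hI

/-- Caputo derivative at a minimum point is nonpositive. -/
theorem caputo_nonpos_at_min (α T t₀ : ℝ) (hα : 0 < α ∧ α < 1) (hT : 0 < T) (f : ℝ → ℝ)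
    (hc : ContinuousOn f (Set.Icc 0 T))
    (hd : ∀ t ∈ Set.Ioo (0:ℝ) T, DifferentiableAt ℝ f t)
    (hd' : ContinuousOn (deriv f) (Set.Ioo 0 T))
    (ht₀ : t₀ ∈ Set.Ioc (0:ℝ) T)
    (hint : IntervalIntegrable (fun s => (t₀ - s) ^ (-α) * deriv f s) MeasureTheory.volume 0 t₀)
    (hmin : ∀ t ∈ Set.Icc (0:ℝ) T, f t₀ ≤ f t) :
    caputo α f t₀ ≤ 0 :=
  caputo_nonpos_at_min_general α T t₀ hα f hc hd ht₀ hint hmin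
end

section
/- (Upper-solution blow-up comparison.) Let 0 < α < 1, c > 0, T > 0, and let F ∈ C¹([0,T]) satisfy F(0) > 0 and the differential inequality ∂^α_{+0,t} F(t) ≥ c F(t)² for all t ∈ (0,T]. Then T ≤ (Γ(α+1)/(c F(0)))^{1/α}; in particular F cannot remain finite on any interval [0,T] with T > (Γ(α+1)/(c F(0)))^{1/α}. -/
open Set MeasureTheory Filter

/-!
Convolving the inequality with the kernel `(b - s) ^ (α - 1)` inverts the Caputo derivative:
by Fubini and a Beta integral, `∫₀ᵇ (b - s) ^ (α - 1) ∂^α F(s) ds = Γ(α) (F(b) - F(0))`, so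
`Γ(α) (F(b) - F(0)) ≥ c ∫₀ᵇ (b - s) ^ (α - 1) F(s)² ds`. Feeding a lower bound for `F` into the
right-hand side and iterating gives `F(t) ≥ F(0) ∑_{n < N} (k t^α)ⁿ` with `k = c F(0) / Γ(α + 1)`;
each round uses `(∑ xⁿ)² ≥ ∑ (m + 1) xᵐ` together with
`Γ((m + 1) α + 1) ≤ (m + 1) Γ(α + 1) Γ(m α + 1)`, which follows from the log-convexity of `Γ`.
Since `F(T)` is finite the geometric series at `t = T` must converge, i.e. `k T^α < 1`.
-/

open Real Finset

theorem integral_rpow_mul_rpow_sub {p q t : ℝ} (hp : 0 < p) (hq : 0 < q) (ht : 0 < t) :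
    ∫ s in (0:ℝ)..t, s ^ (p - 1) * (t - s) ^ (q - 1) =
      Gamma p * Gamma q / Gamma (p + q) * t ^ (p + q - 1) := by
  have hcast : ∀ s ∈ uIcc 0 t, ((s ^ (p - 1) * (t - s) ^ (q - 1) : ℝ) : ℂ) =
      (s : ℂ) ^ ((p : ℂ) - 1) * ((t : ℂ) - s) ^ ((q : ℂ) - 1) := by
    intro s hs
    rw [uIcc_of_le ht.le] at hs
    push_cast [Complex.ofReal_cpow hs.1, Complex.ofReal_cpow (sub_nonneg.2 hs.2)]
    rfl
  apply Complex.ofReal_injective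
  rw [← intervalIntegral.integral_ofReal, intervalIntegral.integral_congr hcast,
    Complex.betaIntegral_scaled _ _ ht,
    Complex.betaIntegral_eq_Gamma_mul_div _ _ (by simpa) (by simpa)]
  push_cast [Complex.ofReal_cpow ht.le, ← Complex.Gamma_ofReal]
  ring

theorem integral_sub_rpow_mul_sub_rpow {p q u b : ℝ} (hp : 0 < p) (hq : 0 < q) (hub : u < b) :
    ∫ s in u..b, (b - s) ^ (p - 1) * (s - u) ^ (q - 1) =
      Gamma p * Gamma q / Gamma (p + q) * (b - u) ^ (p + q - 1) := by
  have := intervalIntegral.integral_comp_sub_right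
    (fun x => x ^ (q - 1) * (b - u - x) ^ (p - 1)) u (a := u) (b := b)
  simp only [sub_self, sub_sub_sub_cancel_right] at this
  simp_rw [mul_comm ((b - _) ^ (p - 1)), this, integral_rpow_mul_rpow_sub hq hp (sub_pos.2 hub),
    mul_comm (Gamma q), add_comm q]

theorem intervalIntegrable_sub_rpow_mul_sub_rpow {p q u b : ℝ} (hp : 0 < p) (hq : 0 < q)
    (hub : u < b) :
    IntervalIntegrable (fun s => (b - s) ^ (p - 1) * (s - u) ^ (q - 1)) volume u b := by
  apply intervalIntegral.intervalIntegrable_of_integral_ne_zero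
  rw [integral_sub_rpow_mul_sub_rpow hp hq hub]
  have := sub_pos.2 hub
  positivity

theorem intervalIntegrable_sub_rpow {r a b : ℝ} (hr : -1 < r) :
    IntervalIntegrable (fun s => (b - s) ^ r) volume a b := by
  simpa using
    (intervalIntegral.intervalIntegrable_rpow' hr (a := b - a) (b := b - b)).comp_sub_left b

-- Wendel's inequality.
theorem Gamma_add_le_Gamma_mul_rpow {x θ : ℝ} (hx : 0 < x) (hθ0 : 0 < θ) (hθ1 : θ < 1) :
    Gamma (x + θ) ≤ Gamma x * x ^ θ := by
  have h := Gamma_mul_add_mul_le_rpow_Gamma_mul_rpow_Gamma hx (by linarith : 0 < x + 1)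
    (sub_pos.2 hθ1) hθ0 (sub_add_cancel 1 θ)
  have hΓ := Gamma_pos_of_pos hx
  rwa [show (1 - θ) * x + θ * (x + 1) = x + θ by ring, Gamma_add_one hx.ne',
    mul_rpow hx.le hΓ.le, mul_left_comm, ← rpow_add hΓ, sub_add_cancel, rpow_one, mul_comm] at h

theorem one_le_Gamma_add_one_mul_rpow {α : ℝ} (h0 : 0 < α) (h1 : α < 1) :
    1 ≤ Gamma (α + 1) * (α + 1) ^ (1 - α) := by
  have h := Gamma_add_le_Gamma_mul_rpow (by linarith : 0 < α + 1) (sub_pos.2 h1)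
    (by linarith : 1 - α < 1)
  rwa [show α + 1 + (1 - α) = 2 by ring, Gamma_two] at h

theorem Gamma_succ_mul_add_one_le {α : ℝ} (h0 : 0 < α) (h1 : α < 1) (m : ℕ) :
    Gamma ((m + 1) * α + 1) ≤ (m + 1) * Gamma (α + 1) * Gamma (m * α + 1) := by
  rcases m.eq_zero_or_pos with rfl | hm
  · simp
  have hm1 : (1 : ℝ) ≤ m := by exact_mod_cast hm
  have hpos : 0 < (m : ℝ) * α + 1 := by positivity
  have hpow : (m * α + 1 : ℝ) ^ α ≤ (m + 1) * Gamma (α + 1) :=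
    calc (m * α + 1 : ℝ) ^ α ≤ (m + 1) ^ α := by gcongr; nlinarith
      _ = (m + 1) / (m + 1) ^ (1 - α) := by
        rw [rpow_sub (by positivity), rpow_one, div_div_cancel₀ (by positivity)]
      _ ≤ (m + 1) / (α + 1) ^ (1 - α) := by gcongr; linarith
      _ ≤ (m + 1) * Gamma (α + 1) := by
        rw [div_le_iff₀ (by positivity), mul_assoc]
        exact le_mul_of_one_le_right (by positivity) (one_le_Gamma_add_one_mul_rpow h0 h1)
  calc Gamma ((m + 1) * α + 1) = Gamma ((m * α + 1) + α) := by ring_nf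
    _ ≤ Gamma (m * α + 1) * (m * α + 1) ^ α := Gamma_add_le_Gamma_mul_rpow hpos h0 h1
    _ ≤ Gamma (m * α + 1) * ((m + 1) * Gamma (α + 1)) := by gcongr
    _ = (m + 1) * Gamma (α + 1) * Gamma (m * α + 1) := by ring

theorem pow_succ_le_integral_sub_rpow_mul_pow {α b : ℝ} (h0 : 0 < α) (h1 : α < 1) (hb : 0 ≤ b)
    (m : ℕ) :
    (b ^ α) ^ (m + 1) ≤ (m + 1) * α * ∫ s in (0:ℝ)..b, (b - s) ^ (α - 1) * (s ^ α) ^ m := by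
  rcases hb.eq_or_lt with rfl | hb
  · simp [zero_rpow h0.ne']
  have hpos : 0 < (m : ℝ) * α + 1 := by positivity
  have hmoment : ∫ s in (0:ℝ)..b, (b - s) ^ (α - 1) * (s ^ α) ^ m =
      Gamma α * Gamma (m * α + 1) / Gamma ((m + 1) * α + 1) * (b ^ α) ^ (m + 1) := by
    have hpow : ∀ s ∈ uIcc 0 b, (b - s) ^ (α - 1) * (s ^ α) ^ m =
        (b - s) ^ (α - 1) * (s - 0) ^ ((m * α + 1) - 1) := fun s hs => by
      rw [sub_zero, add_sub_cancel_right, ← rpow_natCast, ← rpow_mul (uIcc_of_le hb.le ▸ hs).1,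
        mul_comm α]
    rw [intervalIntegral.integral_congr hpow, integral_sub_rpow_mul_sub_rpow h0 hpos hb, sub_zero,
      ← rpow_natCast, ← rpow_mul hb.le]
    push_cast
    ring_nf
  have hΓ : Gamma ((m + 1) * α + 1) ≤ (m + 1) * α * (Gamma α * Gamma (m * α + 1)) :=
    calc Gamma ((m + 1) * α + 1) ≤ (m + 1) * Gamma (α + 1) * Gamma (m * α + 1) :=
          Gamma_succ_mul_add_one_le h0 h1 m
      _ = (m + 1) * α * (Gamma α * Gamma (m * α + 1)) := by rw [Gamma_add_one h0.ne']; ring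
  rw [hmoment, ← mul_assoc, ← mul_div_assoc]
  refine le_mul_of_one_le_left (by positivity) ?_
  rwa [one_le_div (Gamma_pos_of_pos (by positivity))]

theorem sum_range_succ_mul_pow_le_sq {x : ℝ} (hx : 0 ≤ x) (N : ℕ) :
    ∑ m ∈ range N, ((m : ℝ) + 1) * x ^ m ≤ (∑ n ∈ range N, x ^ n) ^ 2 := by
  calc ∑ m ∈ range N, ((m : ℝ) + 1) * x ^ m
      = ∑ m ∈ range N, ∑ k ∈ range (m + 1), x ^ (k + (m - k)) := by
        refine sum_congr rfl fun m _ => ?_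
        rw [sum_congr rfl fun k hk => by
          rw [Nat.add_sub_cancel' (Nat.lt_succ_iff.1 (mem_range.1 hk))]]
        simp
    _ = ∑ i ∈ range N, ∑ j ∈ range (N - i), x ^ (i + j) :=
        sum_range_diag_flip N fun i j => x ^ (i + j)
    _ ≤ ∑ i ∈ range N, ∑ j ∈ range N, x ^ (i + j) := by
        gcongr with i
        exact Nat.sub_le N i
    _ = (∑ n ∈ range N, x ^ n) ^ 2 := by simp_rw [sq, sum_mul_sum, pow_add]

theorem sum_pow_succ_le_integral_sub_rpow_mul_sq {α b k : ℝ} (h0 : 0 < α) (h1 : α < 1)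
    (hb : 0 ≤ b) (hk : 0 ≤ k) (N : ℕ) :
    ∑ m ∈ range N, (k * b ^ α) ^ (m + 1) ≤
      k * α * ∫ s in (0:ℝ)..b, (b - s) ^ (α - 1) * (∑ n ∈ range N, (k * s ^ α) ^ n) ^ 2 := by
  have hK : IntervalIntegrable (fun s => (b - s) ^ (α - 1)) volume 0 b :=
    intervalIntegrable_sub_rpow (by linarith)
  have hpow : ∀ n : ℕ, Continuous fun s : ℝ => (k * s ^ α) ^ n := fun n =>
    (continuous_const.mul (continuous_rpow_const h0.le)).pow n
  calc ∑ m ∈ range N, (k * b ^ α) ^ (m + 1)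
      ≤ ∑ m ∈ range N, k ^ (m + 1) *
          ((m + 1) * α * ∫ s in (0:ℝ)..b, (b - s) ^ (α - 1) * (s ^ α) ^ m) := by
        simp_rw [mul_pow k]
        gcongr with m
        exact pow_succ_le_integral_sub_rpow_mul_pow h0 h1 hb m
    _ = k * α * ∑ m ∈ range N,
          ∫ s in (0:ℝ)..b, (b - s) ^ (α - 1) * ((m + 1) * (k * s ^ α) ^ m) := by
        rw [mul_sum]
        refine sum_congr rfl fun m _ => ?_
        have hterm : ∀ s : ℝ, (b - s) ^ (α - 1) * ((m + 1) * (k * s ^ α) ^ m) =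
            ((m + 1) * k ^ m) * ((b - s) ^ (α - 1) * (s ^ α) ^ m) := fun s => by ring
        simp_rw [hterm, intervalIntegral.integral_const_mul]
        ring
    _ = k * α * ∫ s in (0:ℝ)..b,
          (b - s) ^ (α - 1) * ∑ m ∈ range N, (m + 1) * (k * s ^ α) ^ m := by
        congr 1
        simp_rw [mul_sum]
        rw [intervalIntegral.integral_finsetSum]
        exact fun m _ => hK.mul_continuousOn (continuous_const.mul (hpow m)).continuousOn
    _ ≤ k * α * ∫ s in (0:ℝ)..b, (b - s) ^ (α - 1) * (∑ n ∈ range N, (k * s ^ α) ^ n) ^ 2 := by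
        gcongr
        refine intervalIntegral.integral_mono_on hb
          (hK.mul_continuousOn (continuous_finsetSum _ fun m _ =>
            continuous_const.mul (hpow m)).continuousOn)
          (hK.mul_continuousOn ((continuous_finsetSum _ fun n _ => hpow n).pow 2).continuousOn)
          fun s hs => ?_
        have : 0 ≤ b - s := sub_nonneg.2 hs.2
        gcongr
        exact sum_range_succ_mul_pow_le_sq (by have := hs.1; positivity) N

theorem integral_Ioc_integral_Ioc_swap {a b : ℝ} {φ : ℝ → ℝ → ℝ}
    (hφ : Measurable (Function.uncurry φ))
    (hslice : ∀ u ∈ Ioc a b, IntegrableOn (fun s => φ s u) (Ioc u b))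
    (hnorm : IntegrableOn (fun u => ∫ s in Ioc u b, ‖φ s u‖) (Ioc a b)) :
    IntegrableOn (fun s => ∫ u in Ioc a s, φ s u) (Ioc a b) ∧
      ∫ s in Ioc a b, ∫ u in Ioc a s, φ s u = ∫ u in Ioc a b, ∫ s in Ioc u b, φ s u := by
  set μ := volume.restrict (Ioc a b)
  set f : ℝ × ℝ → ℝ := {z : ℝ × ℝ | z.2 ≤ z.1}.indicator (Function.uncurry φ)
  have hf : Measurable f := hφ.indicator (measurableSet_le measurable_snd measurable_fst)
  have hf_fst : ∀ s u, f (s, u) = (Iic s).indicator (φ s) u := fun s u => by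
    simp [f, indicator]
  have hf_snd : ∀ s u, f (s, u) = (Ici u).indicator (fun s => φ s u) s := fun s u => by
    simp [f, indicator]
  have hinter_fst : ∀ s ∈ Ioc a b, Iic s ∩ Ioc a b = Ioc a s := fun s hs => by
    rw [inter_comm, Ioc_inter_Iic, inf_eq_right.2 hs.2]
  have hinter_snd : ∀ u ∈ Ioc a b, Ici u ∩ Ioc a b = Icc u b := fun u hu => by
    ext s
    simp only [mem_inter_iff, Set.mem_Ici, Set.mem_Ioc, Set.mem_Icc]
    exact ⟨fun h => ⟨h.1, h.2.2⟩, fun h => ⟨h.1, hu.1.trans_le h.1, h.2⟩⟩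
  have hint_fst : ∀ s ∈ Ioc a b, ∫ u, f (s, u) ∂μ = ∫ u in Ioc a s, φ s u := fun s hs => by
    simp_rw [hf_fst]
    rw [integral_indicator measurableSet_Iic, Measure.restrict_restrict measurableSet_Iic,
      hinter_fst s hs]
  have hint_snd : ∀ (ψ : ℝ → ℝ), ∀ u ∈ Ioc a b,
      ∫ s, (Ici u).indicator ψ s ∂μ = ∫ s in Ioc u b, ψ s := fun ψ u hu => by
    rw [integral_indicator measurableSet_Ici, Measure.restrict_restrict measurableSet_Ici,
      hinter_snd u hu, integral_Icc_eq_integral_Ioc]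
  have hprod : Integrable f (μ.prod μ) := by
    rw [integrable_prod_iff' hf.aestronglyMeasurable]
    refine ⟨(ae_restrict_iff' measurableSet_Ioc).2 (ae_of_all _ fun u hu => ?_), hnorm.congr ?_⟩
    · simp_rw [hf_snd]
      rw [integrable_indicator_iff measurableSet_Ici, IntegrableOn,
        Measure.restrict_restrict measurableSet_Ici, hinter_snd u hu]
      exact (integrableOn_Icc_iff_integrableOn_Ioc).2 (hslice u hu)
    · refine (ae_restrict_iff' measurableSet_Ioc).2 (ae_of_all _ fun u hu => ?_)
      simp_rw [hf_snd, norm_indicator_eq_indicator_norm]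
      exact (hint_snd _ u hu).symm
  refine ⟨hprod.integral_prod_left.congr ?_, ?_⟩
  · exact (ae_restrict_iff' measurableSet_Ioc).2 (ae_of_all _ hint_fst)
  calc ∫ s in Ioc a b, ∫ u in Ioc a s, φ s u = ∫ s, ∫ u, f (s, u) ∂μ ∂μ :=
        setIntegral_congr_fun measurableSet_Ioc fun s hs => (hint_fst s hs).symm
    _ = ∫ u, ∫ s, f (s, u) ∂μ ∂μ := integral_integral_swap hprod
    _ = ∫ u in Ioc a b, ∫ s in Ioc u b, φ s u :=
        setIntegral_congr_fun measurableSet_Ioc fun u hu => by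
          simp_rw [hf_snd]
          exact hint_snd _ u hu

theorem integral_sub_rpow_mul_integral_sub_rpow {p q a b : ℝ} (hp : 0 < p) (hq : 0 < q)
    (hab : a ≤ b) {g : ℝ → ℝ} (hg : Measurable g)
    (hgi : IntegrableOn (fun u => (b - u) ^ (p + q - 1) * g u) (Ioc a b)) :
    IntervalIntegrable (fun s => (b - s) ^ (p - 1) * ∫ u in a..s, (s - u) ^ (q - 1) * g u)
        volume a b ∧
      ∫ s in a..b, (b - s) ^ (p - 1) * ∫ u in a..s, (s - u) ^ (q - 1) * g u =
        Gamma p * Gamma q / Gamma (p + q) * ∫ u in a..b, (b - u) ^ (p + q - 1) * g u := by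
  set B := Gamma p * Gamma q / Gamma (p + q)
  set φ : ℝ → ℝ → ℝ := fun s u => (b - s) ^ (p - 1) * ((s - u) ^ (q - 1) * g u) with hφ_def
  have hφ : Measurable (Function.uncurry φ) := by fun_prop
  have hslice : ∀ u ∈ Ioo a b, ∀ h : ℝ,
      IntegrableOn (fun s => (b - s) ^ (p - 1) * ((s - u) ^ (q - 1) * h)) (Ioc u b) ∧
      ∫ s in Ioc u b, (b - s) ^ (p - 1) * ((s - u) ^ (q - 1) * h) =
        B * ((b - u) ^ (p + q - 1) * h) := fun u hu h => by
    simp_rw [← mul_assoc]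
    refine ⟨((intervalIntegrable_iff_integrableOn_Ioc_of_le hu.2.le).1
      (intervalIntegrable_sub_rpow_mul_sub_rpow hp hq hu.2)).mul_const h, ?_⟩
    rw [integral_mul_const, ← intervalIntegral.integral_of_le hu.2.le,
      integral_sub_rpow_mul_sub_rpow hp hq hu.2]
  have hnorm : ∀ u, ∀ s ∈ Ioc u b,
      ‖φ s u‖ = (b - s) ^ (p - 1) * ((s - u) ^ (q - 1) * |g u|) := fun u s hs => by
    rw [hφ_def, norm_mul, norm_mul, Real.norm_eq_abs, Real.norm_eq_abs, Real.norm_eq_abs,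
      abs_of_nonneg (rpow_nonneg (sub_nonneg.2 hs.2) _),
      abs_of_nonneg (rpow_nonneg (sub_nonneg.2 hs.1.le) _)]
  obtain ⟨hint, hswap⟩ := integral_Ioc_integral_Ioc_swap hφ
    (fun u hu => by
      rcases hu.2.eq_or_lt with rfl | hub
      · simp
      · exact (hslice u ⟨hu.1, hub⟩ (g u)).1)
    (by
      rw [integrableOn_Ioc_iff_integrableOn_Ioo]
      refine (IntegrableOn.mono_set (hgi.norm.const_mul B) Ioo_subset_Ioc_self).congr_fun
        (fun u hu => ?_) measurableSet_Ioo
      rw [setIntegral_congr_fun measurableSet_Ioc (hnorm u), (hslice u hu |g u|).2]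
      simp [norm_mul, abs_of_nonneg (rpow_nonneg (sub_nonneg.2 hu.2.le) _)])
  have hinner : ∀ s ∈ Ioc a b, ∫ u in Ioc a s, φ s u =
      (b - s) ^ (p - 1) * ∫ u in a..s, (s - u) ^ (q - 1) * g u := fun s hs => by
    rw [intervalIntegral.integral_of_le hs.1.le, ← integral_const_mul]
  refine ⟨(intervalIntegrable_iff_integrableOn_Ioc_of_le hab).2
    (hint.congr_fun hinner measurableSet_Ioc), ?_⟩
  rw [intervalIntegral.integral_of_le hab, intervalIntegral.integral_of_le hab,
    ← setIntegral_congr_fun measurableSet_Ioc hinner, hswap, ← integral_const_mul,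
    integral_Ioc_eq_integral_Ioo, integral_Ioc_eq_integral_Ioo]
  exact setIntegral_congr_fun measurableSet_Ioo fun u hu => (hslice u hu (g u)).2

theorem integral_sub_rpow_mul_caputo {α b : ℝ} (h0 : 0 < α) (h1 : α < 1) (hb : 0 ≤ b)
    {F : ℝ → ℝ} (hd : ∀ t ∈ Icc 0 b, DifferentiableAt ℝ F t)
    (hd' : ContinuousOn (deriv F) (Icc 0 b)) :
    IntervalIntegrable (fun s => (b - s) ^ (α - 1) * caputo α F s) volume 0 b ∧
      ∫ s in (0:ℝ)..b, (b - s) ^ (α - 1) * caputo α F s = Gamma α * (F b - F 0) := by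
  have hexp : α + (1 - α) - 1 = 0 := by ring
  obtain ⟨hint, heq⟩ := integral_sub_rpow_mul_integral_sub_rpow h0 (sub_pos.2 h1) hb
    (measurable_deriv F)
    (by simpa [hexp] using hd'.integrableOn_Icc.mono_set Ioc_subset_Icc_self)
  have hcaputo : ∀ s, (b - s) ^ (α - 1) * caputo α F s = (Gamma (1 - α))⁻¹ *
      ((b - s) ^ (α - 1) * ∫ u in (0:ℝ)..s, (s - u) ^ (1 - α - 1) * deriv F u) := fun s => by
    rw [caputo, sub_sub_cancel_left]
    ring
  have hftc : ∫ u in (0:ℝ)..b, deriv F u = F b - F 0 :=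
    intervalIntegral.integral_deriv_eq_sub (fun x hx => hd x (by rwa [uIcc_of_le hb] at hx))
      (hd'.intervalIntegrable_of_Icc hb)
  simp_rw [hcaputo]
  refine ⟨hint.const_mul _, ?_⟩
  rw [intervalIntegral.integral_const_mul, heq, hexp]
  simp only [rpow_zero, one_mul, hftc, add_sub_cancel, Gamma_one]
  field_simp [(Gamma_pos_of_pos (sub_pos.2 h1)).ne']

theorem mul_integral_sub_rpow_mul_sq_le_of_le_caputo {α c b : ℝ} (h0 : 0 < α) (h1 : α < 1)
    (hb : 0 ≤ b) {F : ℝ → ℝ} (hd : ∀ t ∈ Icc 0 b, DifferentiableAt ℝ F t)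
    (hd' : ContinuousOn (deriv F) (Icc 0 b)) (hineq : ∀ t ∈ Ioc 0 b, c * F t ^ 2 ≤ caputo α F t) :
    c * ∫ s in (0:ℝ)..b, (b - s) ^ (α - 1) * F s ^ 2 ≤ Gamma α * (F b - F 0) := by
  obtain ⟨hint, heq⟩ := integral_sub_rpow_mul_caputo h0 h1 hb hd hd'
  have hF : ContinuousOn F (uIcc 0 b) := fun t ht =>
    (hd t (by rwa [uIcc_of_le hb] at ht)).continuousAt.continuousWithinAt
  rw [← heq, ← intervalIntegral.integral_const_mul]
  refine intervalIntegral.integral_mono_on_of_le_Ioo hb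
    (((intervalIntegrable_sub_rpow (by linarith)).mul_continuousOn (hF.pow 2)).const_mul c) hint
    fun s hs => ?_
  rw [mul_left_comm]
  exact mul_le_mul_of_nonneg_left (hineq s ⟨hs.1, hs.2.le⟩)
    (rpow_nonneg (sub_nonneg.2 hs.2.le) _)

theorem geom_sum_succ_le_of_integral_sq_le {α c b : ℝ} {F : ℝ → ℝ} (h0 : 0 < α) (h1 : α < 1)
    (hc : 0 ≤ c) (hb : 0 ≤ b) (hF : ContinuousOn F (Icc 0 b)) (hF0 : 0 ≤ F 0)
    (hint : c * ∫ s in (0:ℝ)..b, (b - s) ^ (α - 1) * F s ^ 2 ≤ Gamma α * (F b - F 0)) {N : ℕ}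
    (hN : ∀ s ∈ Icc 0 b, F 0 * ∑ n ∈ range N, (c * F 0 / Gamma (α + 1) * s ^ α) ^ n ≤ F s) :
    F 0 * ∑ n ∈ range (N + 1), (c * F 0 / Gamma (α + 1) * b ^ α) ^ n ≤ F b := by
  set k := c * F 0 / Gamma (α + 1) with hk_def
  have hΓ : 0 < Gamma α := Gamma_pos_of_pos h0
  have hk : 0 ≤ k := by positivity
  have hK : IntervalIntegrable (fun s => (b - s) ^ (α - 1)) volume 0 b :=
    intervalIntegrable_sub_rpow (by linarith)
  have hS : Continuous fun s : ℝ => F 0 * ∑ n ∈ range N, (k * s ^ α) ^ n :=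
    continuous_const.mul (continuous_finsetSum _ fun n _ =>
      (continuous_const.mul (continuous_rpow_const h0.le)).pow n)
  have hsq : ∫ s in (0:ℝ)..b, (b - s) ^ (α - 1) * (F 0 * ∑ n ∈ range N, (k * s ^ α) ^ n) ^ 2 ≤
      ∫ s in (0:ℝ)..b, (b - s) ^ (α - 1) * F s ^ 2 := by
    refine intervalIntegral.integral_mono_on hb (hK.mul_continuousOn (hS.pow 2).continuousOn)
      (hK.mul_continuousOn ((hF.pow 2).mono (by rw [uIcc_of_le hb]))) fun s hs => ?_
    have : 0 ≤ b - s := sub_nonneg.2 hs.2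
    have : 0 ≤ s := hs.1
    gcongr
    exact hN s hs
  have hΓk : Gamma α * (k * α) = c * F 0 := by
    rw [hk_def, Gamma_add_one h0.ne']
    field_simp
  set I := ∫ s in (0:ℝ)..b, (b - s) ^ (α - 1) * (∑ n ∈ range N, (k * s ^ α) ^ n) ^ 2
  have key : Gamma α * (F 0 * ∑ m ∈ range N, (k * b ^ α) ^ (m + 1)) ≤ Gamma α * (F b - F 0) :=
    calc Gamma α * (F 0 * ∑ m ∈ range N, (k * b ^ α) ^ (m + 1))
        ≤ Gamma α * (F 0 * (k * α * I)) := by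
          gcongr
          exact sum_pow_succ_le_integral_sub_rpow_mul_sq h0 h1 hb hk N
      _ = c * ∫ s in (0:ℝ)..b, (b - s) ^ (α - 1) * (F 0 * ∑ n ∈ range N, (k * s ^ α) ^ n) ^ 2 := by
          simp_rw [mul_pow (F 0), mul_left_comm _ (F 0 ^ 2), intervalIntegral.integral_const_mul]
          linear_combination F 0 * I * hΓk
      _ ≤ c * ∫ s in (0:ℝ)..b, (b - s) ^ (α - 1) * F s ^ 2 := by gcongr
      _ ≤ Gamma α * (F b - F 0) := hint
  rw [sum_range_succ', pow_zero, mul_add, mul_one]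
  linarith [le_of_mul_le_mul_left key hΓ]

theorem geom_sum_le_of_integral_sq_le {α c T : ℝ} {F : ℝ → ℝ} (h0 : 0 < α) (h1 : α < 1)
    (hc : 0 ≤ c) (hF : ContinuousOn F (Icc 0 T)) (hF0 : 0 ≤ F 0)
    (hint : ∀ b ∈ Icc 0 T,
      c * ∫ s in (0:ℝ)..b, (b - s) ^ (α - 1) * F s ^ 2 ≤ Gamma α * (F b - F 0)) (N : ℕ) :
    ∀ b ∈ Icc 0 T, F 0 * ∑ n ∈ range N, (c * F 0 / Gamma (α + 1) * b ^ α) ^ n ≤ F b := by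
  have hmono : ∀ b ∈ Icc 0 T, F 0 ≤ F b := fun b hb => by
    have : 0 ≤ c * ∫ s in (0:ℝ)..b, (b - s) ^ (α - 1) * F s ^ 2 :=
      mul_nonneg hc <| intervalIntegral.integral_nonneg hb.1 fun s hs =>
        mul_nonneg (rpow_nonneg (sub_nonneg.2 hs.2) _) (sq_nonneg _)
    nlinarith [hint b hb, Gamma_pos_of_pos h0]
  induction N with
  | zero => simpa using fun b hb => hF0.trans (hmono b hb)
  | succ N ih =>
    intro b hb
    exact geom_sum_succ_le_of_integral_sq_le h0 h1 hc hb.1 (hF.mono (Icc_subset_Icc_right hb.2))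
      hF0 (hint b hb) fun s hs => ih s ⟨hs.1, hs.2.trans hb.2⟩

theorem lt_one_of_forall_mul_geom_sum_le {a x B : ℝ} (ha : 0 < a)
    (h : ∀ N : ℕ, a * ∑ n ∈ range N, x ^ n ≤ B) : x < 1 := by
  by_contra! hx
  obtain ⟨N, hN⟩ := exists_nat_gt (B / a)
  have hsum : (N : ℝ) ≤ ∑ n ∈ range N, x ^ n := by
    simpa using card_nsmul_le_sum (range N) (x ^ ·) 1 fun n _ => one_le_pow₀ hx
  have := mul_le_mul_of_nonneg_left hsum ha.le
  rw [div_lt_iff₀ ha] at hN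
  linarith [h N]

/-- Upper-solution blow-up comparison: if ∂^α F ≥ c F² on (0,T] and F(0) > 0,
then T ≤ (Γ(α+1)/(c F(0)))^(1/α). -/
theorem caputo_blowup_comparison (α c T : ℝ) (hα : 0 < α ∧ α < 1) (hc : 0 < c) (hT : 0 < T)
    (F : ℝ → ℝ)
    (hd : ∀ t ∈ Set.Icc (0:ℝ) T, DifferentiableAt ℝ F t)
    (hd' : ContinuousOn (deriv F) (Set.Icc 0 T))
    (hF0 : 0 < F 0)
    (hineq : ∀ t ∈ Set.Ioc (0:ℝ) T, c * (F t) ^ 2 ≤ caputo α F t) :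
    T ≤ (Real.Gamma (α + 1) / (c * F 0)) ^ (1 / α) := by
  obtain ⟨h0, h1⟩ := hα
  have hF : ContinuousOn F (Icc 0 T) := fun t ht => (hd t ht).continuousAt.continuousWithinAt
  have hint : ∀ b ∈ Icc 0 T,
      c * ∫ s in (0:ℝ)..b, (b - s) ^ (α - 1) * F s ^ 2 ≤ Gamma α * (F b - F 0) := fun b hb =>
    mul_integral_sub_rpow_mul_sq_le_of_le_caputo h0 h1 hb.1
      (fun t ht => hd t ⟨ht.1, ht.2.trans hb.2⟩) (hd'.mono (Icc_subset_Icc_right hb.2))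
      fun t ht => hineq t ⟨ht.1, ht.2.trans hb.2⟩
  have hlt : c * F 0 / Gamma (α + 1) * T ^ α < 1 := lt_one_of_forall_mul_geom_sum_le hF0
    fun N => geom_sum_le_of_integral_sq_le h0 h1 hc.le hF hF0.le hint N T ⟨hT.le, le_rfl⟩
  have hΓ : 0 < Gamma (α + 1) := Gamma_pos_of_pos (by linarith)
  rw [div_mul_eq_mul_div, div_lt_one hΓ] at hlt
  rw [one_div, le_rpow_inv_iff_of_pos hT.le (by positivity) h0, le_div_iff₀ (by positivity)]
  linarith
end

section
/- (Energy identity for the time-fractional modified KdV–Burgers equation.) Let 0 < α < 1, a,b ∈ ℝ, L > 0, and let u ∈ C^{1,3}_{t,x}([0,T]×[0,L]) solve ∂^α_{+0,t}u + u²u_x + a u_{xxx} − b u_{xx} = 0 on (0,L)×(0,T]. Then for every φ ∈ C³([0,L]) and every t ∈ (0,T], ∫₀^L (∂^α_{+0,t}u(x,t)) u(x,t)φ(x) dx = (1/4)∫₀^L u⁴(x,t)φ′(x) dx + (1/2)∫₀^L u²(x,t)(aφ‴(x) + bφ″(x)) dx − ∫₀^L u_x²(x,t)((3a/2)φ′(x)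 + bφ(x)) dx + 𝓑(L,t) − 𝓑(0,t). -/
open Set MeasureTheory Filter

/-- Partial derivative in the first (spatial) variable. -/
noncomputable def pdX (u : ℝ → ℝ → ℝ) : ℝ → ℝ → ℝ := fun x t => deriv (fun y => u y t) x

/-- Partial derivative in the second (time) variable. -/
noncomputable def pdT (u : ℝ → ℝ → ℝ) : ℝ → ℝ → ℝ := fun x t => deriv (fun s => u x s) t

/-- Caputo fractional derivative in the time variable (x fixed). -/
noncomputable def capT (α : ℝ) (u : ℝ → ℝ → ℝ) (x t : ℝ) : ℝ := caputo α (fun s => u x s) t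

/-- u belongs to C^{1,n}_{t,x}([0,T] x [0,L]): the spatial derivatives up to order n and
their first time derivatives exist and are continuous on the closed rectangle. -/
def CReg (n : ℕ) (u : ℝ → ℝ → ℝ) (L T : ℝ) : Prop :=
  (∀ k ≤ n, ContinuousOn (fun p : ℝ × ℝ => (pdX^[k] u) p.1 p.2) (Icc 0 L ×ˢ Icc 0 T)) ∧
  (∀ k ≤ n, ContinuousOn (fun p : ℝ × ℝ => pdT (pdX^[k] u) p.1 p.2) (Icc 0 L ×ˢ Icc 0 T)) ∧
  (∀ k < n, ∀ x ∈ Icc (0:ℝ) L, ∀ t ∈ Icc (0:ℝ) T, DifferentiableAt ℝ (fun y => (pdX^[k] u) y t) x) ∧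
  (∀ k ≤ n, ∀ x ∈ Icc (0:ℝ) L, ∀ t ∈ Icc (0:ℝ) T, DifferentiableAt ℝ (fun s => (pdX^[k] u) x s) t)

/-- φ belongs to C^n([0,L]). -/
def Csp (n : ℕ) (φ : ℝ → ℝ) (L : ℝ) : Prop :=
  (∀ k < n, ∀ x ∈ Icc (0:ℝ) L, DifferentiableAt ℝ (deriv^[k] φ) x) ∧
  ContinuousOn (deriv^[n] φ) (Icc 0 L)


/-- Boundary expression for the modified KdV-Burgers equation. -/
noncomputable def B12 (a b : ℝ) (u : ℝ → ℝ → ℝ) (φ : ℝ → ℝ) (x t : ℝ) : ℝ :=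
  -(1/4) * (u x t) ^ 4 * φ x + u x t * pdX u x t * (a * deriv φ x + b * φ x)
    - (1/2) * (u x t) ^ 2 * (a * deriv (deriv φ) x + b * deriv φ x)
    + (a/2) * (pdX u x t) ^ 2 * φ x - a * u x t * pdX (pdX u) x t * φ x

/-! The identity is a statement about each time slice `v = u(·, t)` separately: the PDE gives
`∂^α u = -(v² v' + a v''' - b v'')`, and `𝓑(·, t)` is an antiderivative of
`-(v² v' + a v''' - b v'') v φ` minus the three bulk integrands, so the fundamental theorem of
calculus on `[0, L]` yields the identity. The fractional derivative only enters through the PDE. -/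

theorem Csp.continuousOn_iterate_deriv {n k : ℕ} {φ : ℝ → ℝ} {L : ℝ} (h : Csp n φ L)
    (hk : k ≤ n) : ContinuousOn (deriv^[k] φ) (Icc 0 L) := by
  rcases hk.lt_or_eq with hk | rfl
  · exact fun x hx => (h.1 k hk x hx).continuousAt.continuousWithinAt
  · exact h.2

theorem iterate_pdX_slice (u : ℝ → ℝ → ℝ) (t : ℝ) (k : ℕ) :
    (fun y => (pdX^[k] u) y t) = deriv^[k] (fun y => u y t) := by
  induction k with
  | zero => rfl
  | succ k ih =>
    rw [Function.iterate_succ_apply', Function.iterate_succ_apply', ← ih]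
    rfl

theorem CReg.csp_slice {n : ℕ} {u : ℝ → ℝ → ℝ} {L T t : ℝ} (h : CReg n u L T)
    (ht : t ∈ Icc 0 T) : Csp n (fun y => u y t) L := by
  refine ⟨fun k hk x hx => ?_, ?_⟩
  · rw [← iterate_pdX_slice]
    exact h.2.2.1 k hk x hx t ht
  · rw [← iterate_pdX_slice]
    exact (h.1 n le_rfl).comp (by fun_prop) fun x hx => mk_mem_prod hx ht

noncomputable def mkdvBoundary (a b : ℝ) (v φ : ℝ → ℝ) (x : ℝ) : ℝ :=
  -(1/4) * v x ^ 4 * φ x + v x * deriv v x * (a * deriv φ x + b * φ x)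
    - (1/2) * v x ^ 2 * (a * deriv (deriv φ) x + b * deriv φ x)
    + (a/2) * deriv v x ^ 2 * φ x - a * v x * deriv (deriv v) x * φ x

theorem hasDerivAt_mkdvBoundary (a b : ℝ) {v φ : ℝ → ℝ} {x : ℝ}
    (hv₀ : DifferentiableAt ℝ v x) (hv₁ : DifferentiableAt ℝ (deriv v) x)
    (hv₂ : DifferentiableAt ℝ (deriv (deriv v)) x)
    (hφ₀ : DifferentiableAt ℝ φ x) (hφ₁ : DifferentiableAt ℝ (deriv φ) x)
    (hφ₂ : DifferentiableAt ℝ (deriv (deriv φ)) x) :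
    HasDerivAt (mkdvBoundary a b v φ)
      (-(v x ^ 2 * deriv v x + a * deriv (deriv (deriv v)) x - b * deriv (deriv v) x)
          * v x * φ x
        - ((1/4) * (v x ^ 4 * deriv φ x)
          + (1/2) * (v x ^ 2 * (a * deriv (deriv (deriv φ)) x + b * deriv (deriv φ) x))
          - deriv v x ^ 2 * ((3 * a / 2) * deriv φ x + b * φ x))) x := by
  have hv := hv₀.hasDerivAt
  have hv' := hv₁.hasDerivAt
  have hv'' := hv₂.hasDerivAt
  have hφ := hφ₀.hasDerivAt
  have hφ' := hφ₁.hasDerivAt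
  have hφ'' := hφ₂.hasDerivAt
  have H := (((((hv.pow 4).const_mul (-(1/4) : ℝ)).mul hφ).add
      ((hv.mul hv').mul ((hφ'.const_mul a).add (hφ.const_mul b)))).sub
      ((hv.pow 2).const_mul (1/2 : ℝ) |>.mul ((hφ''.const_mul a).add (hφ'.const_mul b)))).add
      (((hv'.pow 2).const_mul (a/2)).mul hφ) |>.sub (((hv.const_mul a).mul hv'').mul hφ)
  refine H.congr_deriv ?_
  simp only [Pi.add_apply, Pi.mul_apply, Pi.pow_apply]
  push_cast
  ring

theorem integral_mul_mul_eq_of_mkdv (a b : ℝ) {L : ℝ} (hL : 0 ≤ L) {v φ c : ℝ → ℝ}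
    (hv : Csp 3 v L) (hφ : Csp 3 φ L)
    (hc : ∀ x ∈ Ioo 0 L,
      c x + v x ^ 2 * deriv v x + a * deriv (deriv (deriv v)) x - b * deriv (deriv v) x = 0) :
    ∫ x in (0:ℝ)..L, c x * v x * φ x
      = (1/4) * (∫ x in (0:ℝ)..L, v x ^ 4 * deriv φ x)
        + (1/2) * (∫ x in (0:ℝ)..L,
            v x ^ 2 * (a * deriv (deriv (deriv φ)) x + b * deriv (deriv φ) x))
        - (∫ x in (0:ℝ)..L, deriv v x ^ 2 * ((3 * a / 2) * deriv φ x + b * φ x))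
        + mkdvBoundary a b v φ L - mkdvBoundary a b v φ 0 := by
  have hv₀ : ContinuousOn v (Icc 0 L) := hv.continuousOn_iterate_deriv (k := 0) (by norm_num)
  have hv₁ : ContinuousOn (deriv v) (Icc 0 L) :=
    hv.continuousOn_iterate_deriv (k := 1) (by norm_num)
  have hv₂ : ContinuousOn (deriv (deriv v)) (Icc 0 L) :=
    hv.continuousOn_iterate_deriv (k := 2) (by norm_num)
  have hv₃ : ContinuousOn (deriv (deriv (deriv v))) (Icc 0 L) := hv.2
  have hφ₀ : ContinuousOn φ (Icc 0 L) := hφ.continuousOn_iterate_deriv (k := 0) (by norm_num)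
  have hφ₁ : ContinuousOn (deriv φ) (Icc 0 L) :=
    hφ.continuousOn_iterate_deriv (k := 1) (by norm_num)
  have hφ₂ : ContinuousOn (deriv (deriv φ)) (Icc 0 L) :=
    hφ.continuousOn_iterate_deriv (k := 2) (by norm_num)
  have hφ₃ : ContinuousOn (deriv (deriv (deriv φ))) (Icc 0 L) := hφ.2
  set P : ℝ → ℝ := fun x => v x ^ 4 * deriv φ x
  set Q : ℝ → ℝ := fun x =>
    v x ^ 2 * (a * deriv (deriv (deriv φ)) x + b * deriv (deriv φ) x)
  set R : ℝ → ℝ := fun x => deriv v x ^ 2 * ((3 * a / 2) * deriv φ x + b * φ x)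
  set E : ℝ → ℝ := fun x =>
    -(v x ^ 2 * deriv v x + a * deriv (deriv (deriv v)) x - b * deriv (deriv v) x) * v x * φ x
      - ((1/4) * P x + (1/2) * Q x - R x)
  have hP : IntervalIntegrable P volume 0 L :=
    ContinuousOn.intervalIntegrable_of_Icc hL (by fun_prop)
  have hQ : IntervalIntegrable Q volume 0 L :=
    ContinuousOn.intervalIntegrable_of_Icc hL (by fun_prop)
  have hR : IntervalIntegrable R volume 0 L :=
    ContinuousOn.intervalIntegrable_of_Icc hL (by fun_prop)
  have hE : IntervalIntegrable E volume 0 L :=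
    ContinuousOn.intervalIntegrable_of_Icc hL (by fun_prop)
  have hB : ∀ x ∈ uIcc 0 L, HasDerivAt (mkdvBoundary a b v φ) (E x) x := fun x hx => by
    rw [uIcc_of_le hL] at hx
    exact hasDerivAt_mkdvBoundary a b (hv.1 0 (by norm_num) x hx) (hv.1 1 (by norm_num) x hx)
      (hv.1 2 (by norm_num) x hx) (hφ.1 0 (by norm_num) x hx) (hφ.1 1 (by norm_num) x hx)
      (hφ.1 2 (by norm_num) x hx)
  have hcE : EqOn (fun x => c x * v x * φ x) (fun x => (1/4) * P x + (1/2) * Q x - R x + E x)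
      (Ioo 0 L) := fun x hx => by
    simp only [E]
    linear_combination v x * φ x * hc x hx
  rw [intervalIntegral.integral_congr_Ioo_of_le hL hcE,
    intervalIntegral.integral_add (((hP.const_mul _).add (hQ.const_mul _)).sub hR) hE,
    intervalIntegral.integral_sub ((hP.const_mul _).add (hQ.const_mul _)) hR,
    intervalIntegral.integral_add (hP.const_mul _) (hQ.const_mul _),
    intervalIntegral.integral_const_mul, intervalIntegral.integral_const_mul,
    intervalIntegral.integral_eq_sub_of_hasDerivAt hB hE]
  ring

theorem mkdv_burgers_energy_identity_general
    (α a b L T : ℝ) (hL : 0 < L)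
    (u : ℝ → ℝ → ℝ)
    (hreg : CReg 3 u L T)
    (hpde : ∀ x ∈ Ioo (0:ℝ) L, ∀ t ∈ Ioc (0:ℝ) T,
      capT α u x t + (u x t) ^ 2 * pdX u x t + a * pdX (pdX (pdX u)) x t
        - b * pdX (pdX u) x t = 0) :
    ∀ φ : ℝ → ℝ, Csp 3 φ L → ∀ t ∈ Ioc (0:ℝ) T,
      (∫ x in (0:ℝ)..L, capT α u x t * u x t * φ x)
        = (1/4) * (∫ x in (0:ℝ)..L, (u x t) ^ 4 * deriv φ x)
          + (1/2) * (∫ x in (0:ℝ)..L, (u x t) ^ 2 * (a * deriv (deriv (deriv φ)) x + b * deriv (deriv φ) x))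
          - (∫ x in (0:ℝ)..L, (pdX u x t) ^ 2 * ((3 * a / 2) * deriv φ x + b * φ x))
          + B12 a b u φ L t - B12 a b u φ 0 t := by
  intro φ hφ t ht
  -- `B12 a b u φ x t` and `pdX (pdX u) x t` unfold to `mkdvBoundary` and `deriv (deriv ·)` of
  -- the slice `fun y => u y t`.
  exact integral_mul_mul_eq_of_mkdv a b hL.le (hreg.csp_slice (Ioc_subset_Icc_self ht)) hφ
    fun x hx => hpde x hx t ht

/-- Energy identity for the time-fractional modified KdV-Burgers equation. -/
theorem mkdv_burgers_energy_identity
    (α a b L T : ℝ) (hα : 0 < α ∧ α < 1) (hL : 0 < L) (hT : 0 < T)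
    (u : ℝ → ℝ → ℝ)
    (hreg : CReg 3 u L T)
    (hpde : ∀ x ∈ Ioo (0:ℝ) L, ∀ t ∈ Ioc (0:ℝ) T,
      capT α u x t + (u x t) ^ 2 * pdX u x t + a * pdX (pdX (pdX u)) x t
        - b * pdX (pdX u) x t = 0) :
    ∀ φ : ℝ → ℝ, Csp 3 φ L → ∀ t ∈ Ioc (0:ℝ) T,
      (∫ x in (0:ℝ)..L, capT α u x t * u x t * φ x)
        = (1/4) * (∫ x in (0:ℝ)..L, (u x t) ^ 4 * deriv φ x)
          + (1/2) * (∫ x in (0:ℝ)..L, (u x t) ^ 2 * (a * deriv (deriv (deriv φ)) x + b * deriv (deriv φ) x))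
          - (∫ x in (0:ℝ)..L, (pdX u x t) ^ 2 * ((3 * a / 2) * deriv φ x + b * φ x))
          + B12 a b u φ L t - B12 a b u φ 0 t :=
  mkdv_burgers_energy_identity_general α a b L T hL u hreg hpde
end

section
/- (Minimum principle for the time-fractional Burgers equation.) Let 0 < α < 1, ν > 0, L > 0, T > 0, and let u be continuous on [0,L]×[0,T), twice continuously differentiable in x on (0,L) and continuously differentiable in t on (0,T) such that the Caputo derivative ∂^α_{+0,t}u(x,t) exists, and suppose u satisfies ∂^α_{+0,t}u + u u_x = ν u_{xx} on (0,L)×(0,T) together with u(x,0) = u₀(x). Then for all (x,t) ∈ [0,L]×[0,T), u(x,t) ≥ m, where m is the infimum over the set consisting of the values u(0,s) and u(L,s) for s ∈ [0,T) and u₀(y) for y ∈ [0,L]. -/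
open Set MeasureTheory Filter
open Topology

lemma second_deriv_nonneg_of_min {f : ℝ → ℝ} {a b x₀ : ℝ}
    (hx₀ : x₀ ∈ Ioo a b)
    (hd : ∀ x ∈ Ioo a b, DifferentiableAt ℝ f x)
    (hd' : DifferentiableAt ℝ (deriv f) x₀)
    (hmin : ∀ x ∈ Ioo a b, f x₀ ≤ f x) :
    0 ≤ deriv (deriv f) x₀ := by
  by_contra hneg
  push_neg at hneg
  have hloc : IsLocalMin f x₀ := by
    filter_upwards [Ioo_mem_nhds hx₀.1 hx₀.2] with y hy using hmin y hy
  have h0 : deriv f x₀ = 0 := hloc.deriv_eq_zero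
  have hder : Tendsto (slope (deriv f) x₀) (𝓝[≠] x₀) (𝓝 (deriv (deriv f) x₀)) :=
    hasDerivAt_iff_tendsto_slope.mp hd'.hasDerivAt
  have hev : ∀ᶠ y in 𝓝[>] x₀, slope (deriv f) x₀ y < 0 :=
    (hder.mono_left (nhdsWithin_mono _ (fun y hy => ne_of_gt hy))).eventually_lt_const hneg
  obtain ⟨c, hc, hcP⟩ := (nhdsGT_basis x₀).eventually_iff.mp hev
  set z : ℝ := (x₀ + min c b) / 2 with hz
  have hmincb : x₀ < min c b := lt_min hc hx₀.2
  have hx₀z : x₀ < z := by simp only [hz]; linarith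
  have hzc : z < min c b := by simp only [hz]; linarith
  have hsub : Icc x₀ z ⊆ Ioo a b := fun y hy =>
    ⟨lt_of_lt_of_le hx₀.1 hy.1, lt_of_le_of_lt hy.2 (lt_of_lt_of_le hzc (min_le_right c b))⟩
  have hanti : StrictAntiOn f (Icc x₀ z) := by
    apply strictAntiOn_of_deriv_neg (convex_Icc x₀ z)
    · exact fun y hy => ((hd y (hsub hy)).continuousAt).continuousWithinAt
    · intro y hy
      rw [interior_Icc] at hy
      have hyc : y ∈ Ioo x₀ c := ⟨hy.1, lt_of_lt_of_le (lt_of_lt_of_le hy.2 hzc.le) (min_le_left c b)⟩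
      have hs := hcP hyc
      rw [slope_def_field, h0, sub_zero] at hs
      have hden : (0:ℝ) < y - x₀ := sub_pos.mpr hy.1
      rcases div_neg_iff.mp hs with ⟨h1, h2⟩ | ⟨h1, h2⟩ <;> linarith
  have : f z < f x₀ := hanti (left_mem_Icc.mpr hx₀z.le) (right_mem_Icc.mpr hx₀z.le) hx₀z
  exact absurd (hmin z (hsub (right_mem_Icc.mpr hx₀z.le))) (not_le.mpr this)



lemma caputo_integral_neg {α t₀ : ℝ} (hα0 : 0 < α) (hα1 : α < 1) (ht₀ : 0 < t₀)
    {f : ℝ → ℝ}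
    (hfc : ContinuousOn f (Icc 0 t₀))
    (hfd : ∀ s ∈ Ioc 0 t₀, DifferentiableAt ℝ f s)
    (hf'c : ContinuousOn (deriv f) (Ioc 0 t₀))
    (hint : IntervalIntegrable (fun s => (t₀ - s) ^ (-α) * deriv f s) volume 0 t₀)
    (hmin : ∀ s ∈ Icc 0 t₀, f t₀ ≤ f s)
    (hstrict : f t₀ < f 0) :
    (∫ s in (0:ℝ)..t₀, (t₀ - s) ^ (-α) * deriv f s) < 0 := by
  set g : ℝ → ℝ := fun s => f s - f t₀ with hg
  set h : ℝ → ℝ := fun s => (t₀ - s) ^ (-α) * deriv f s with hh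
  have hg0 : ∀ s ∈ Icc 0 t₀, 0 ≤ g s := fun s hs => sub_nonneg.mpr (hmin s hs)
  have hg_deriv : ∀ s ∈ Ioc 0 t₀, HasDerivAt g (deriv f s) s :=
    fun s hs => ((hfd s hs).hasDerivAt).sub_const _
  have hgc : ContinuousOn g (Icc 0 t₀) := hfc.sub continuousOn_const
  -- integrability of h on subintervals of [0, t₀]
  have hIntOn : ∀ c ∈ Icc 0 t₀, ∀ d ∈ Icc (0:ℝ) t₀, IntervalIntegrable h volume c d := by
    intro c hc d hd
    apply hint.mono_set
    rw [uIcc_of_le ht₀.le]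
    exact uIcc_subset_Icc hc hd
  -- Step 1 : integration by parts inequality on [δ, τ]
  have step1 : ∀ δ τ : ℝ, 0 < δ → δ ≤ τ → τ < t₀ →
      (∫ s in δ..τ, h s) ≤ (t₀ - τ) ^ (-α) * g τ - (t₀ - δ) ^ (-α) * g δ := by
    intro δ τ hδ hδτ hτ
    have huIcc : uIcc δ τ = Icc δ τ := uIcc_of_le hδτ
    have hsub : Icc δ τ ⊆ Ioc 0 t₀ := fun s hs => ⟨lt_of_lt_of_le hδ hs.1, (hs.2.trans hτ.le)⟩
    have hw : ∀ s ∈ uIcc δ τ, HasDerivAt (fun r => (t₀ - r) ^ (-α)) (α * (t₀ - s) ^ (-α - 1)) s := by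
      intro s hs
      rw [huIcc] at hs
      have hpos : 0 < t₀ - s := sub_pos.mpr (lt_of_le_of_lt hs.2 hτ)
      have h1 : HasDerivAt (fun r : ℝ => t₀ - r) (-1) s := (hasDerivAt_id s).const_sub t₀
      have := h1.rpow_const (p := -α) (Or.inl hpos.ne')
      convert this using 1
      ring
    have hv : ∀ s ∈ uIcc δ τ, HasDerivAt g (deriv f s) s := by
      intro s hs; rw [huIcc] at hs; exact hg_deriv s (hsub hs)
    have hcont_w' : ContinuousOn (fun s => α * (t₀ - s) ^ (-α - 1)) (Icc δ τ) := by
      apply continuousOn_const.mul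
      apply ContinuousOn.rpow_const ((continuous_const.sub continuous_id).continuousOn)
      intro s hs
      exact Or.inl (sub_pos.mpr (lt_of_le_of_lt hs.2 hτ)).ne'
    have hu' : IntervalIntegrable (fun s => α * (t₀ - s) ^ (-α - 1)) volume δ τ := by
      apply ContinuousOn.intervalIntegrable; rwa [huIcc]
    have hv' : IntervalIntegrable (deriv f) volume δ τ := by
      apply ContinuousOn.intervalIntegrable
      rw [huIcc]; exact hf'c.mono hsub
    have hibp := intervalIntegral.integral_mul_deriv_eq_deriv_mul hw hv hu' hv'
    have hnonneg : 0 ≤ ∫ s in δ..τ, α * (t₀ - s) ^ (-α - 1) * g s := by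
      apply intervalIntegral.integral_nonneg hδτ
      intro s hs
      exact mul_nonneg (mul_nonneg hα0.le (Real.rpow_nonneg
        (sub_nonneg.mpr ((hs.2.trans hτ.le).trans (le_refl t₀))) _)) (hg0 s (Ioc_subset_Icc_self (hsub hs)))
    calc (∫ s in δ..τ, h s) = (∫ s in δ..τ, (t₀ - s) ^ (-α) * deriv f s) := rfl
      _ = (t₀ - τ) ^ (-α) * g τ - (t₀ - δ) ^ (-α) * g δ
            - ∫ s in δ..τ, α * (t₀ - s) ^ (-α - 1) * g s := hibp
      _ ≤ (t₀ - τ) ^ (-α) * g τ - (t₀ - δ) ^ (-α) * g δ := by linarith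
  -- continuity of the primitive
  have hprim : ∀ b₀ : ℝ, ContinuousWithinAt (fun τ => ∫ s in (0:ℝ)..τ, h s) (Icc 0 t₀) b₀ := by
    intro b₀
    apply intervalIntegral.continuousWithinAt_primitive (by simp)
    rw [min_self, max_eq_right ht₀.le]
    exact hint
  -- Step 2 : let δ → 0⁺
  have step2 : ∀ τ : ℝ, 0 < τ → τ < t₀ →
      (∫ s in (0:ℝ)..τ, h s) ≤ (t₀ - τ) ^ (-α) * g τ - t₀ ^ (-α) * g 0 := by
    intro τ hτ0 hτt
    have hmemIcc : ∀ᶠ δ in 𝓝[>] (0:ℝ), δ ∈ Ioc 0 τ := by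
      filter_upwards [self_mem_nhdsWithin,
        nhdsWithin_le_nhds (Iio_mem_nhds hτ0)]
        with δ h1 h2
      exact ⟨h1, le_of_lt h2⟩
    have hle : 𝓝[>] (0:ℝ) ≤ 𝓝[Icc 0 t₀] 0 := by
      apply nhdsWithin_le_of_mem
      rw [← Filter.eventually_mem_set]
      filter_upwards [hmemIcc] with δ hδ
      exact ⟨hδ.1.le, hδ.2.trans hτt.le⟩
    have hT0 : Tendsto (fun δ => ∫ s in (0:ℝ)..δ, h s) (𝓝[>] (0:ℝ)) (𝓝 0) := by
      have := (hprim 0).tendsto.mono_left hle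
      simpa using this
    have hTlhs : Tendsto (fun δ => ∫ s in δ..τ, h s) (𝓝[>] (0:ℝ)) (𝓝 (∫ s in (0:ℝ)..τ, h s)) := by
      apply Tendsto.congr' (f₁ := fun δ => (∫ s in (0:ℝ)..τ, h s) - ∫ s in (0:ℝ)..δ, h s)
      · filter_upwards [hmemIcc] with δ hδ
        have h1 : IntervalIntegrable h volume 0 δ :=
          hIntOn 0 (left_mem_Icc.mpr ht₀.le) δ ⟨hδ.1.le, hδ.2.trans hτt.le⟩
        have h2 : IntervalIntegrable h volume δ τ :=
          hIntOn δ ⟨hδ.1.le, hδ.2.trans hτt.le⟩ τ ⟨hτ0.le, hτt.le⟩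
        rw [← intervalIntegral.integral_add_adjacent_intervals h1 h2]
        ring
      · simpa using tendsto_const_nhds.sub hT0
    have hTg : Tendsto g (𝓝[>] (0:ℝ)) (𝓝 (g 0)) := (hgc.continuousWithinAt
        (left_mem_Icc.mpr ht₀.le)).tendsto.mono_left hle
    have hTw : Tendsto (fun δ : ℝ => (t₀ - δ) ^ (-α)) (𝓝[>] (0:ℝ)) (𝓝 (t₀ ^ (-α))) := by
      have hca : ContinuousAt (fun δ : ℝ => (t₀ - δ) ^ (-α)) 0 := by
        apply ContinuousAt.rpow_const
        · exact (continuous_const.sub continuous_id).continuousAt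
        · left; simpa using ht₀.ne'
      have := hca.tendsto.mono_left (nhdsWithin_le_nhds (s := Ioi (0:ℝ)))
      simpa using this
    have hTrhs : Tendsto (fun δ => (t₀ - τ) ^ (-α) * g τ - (t₀ - δ) ^ (-α) * g δ)
        (𝓝[>] (0:ℝ)) (𝓝 ((t₀ - τ) ^ (-α) * g τ - t₀ ^ (-α) * g 0)) :=
      tendsto_const_nhds.sub (hTw.mul hTg)
    apply le_of_tendsto_of_tendsto hTlhs hTrhs
    filter_upwards [hmemIcc] with δ hδ
    exact step1 δ τ hδ.1 hδ.2 hτt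
  -- Step 3 : let τ → t₀⁻
  have hmemIcc' : ∀ᶠ τ in 𝓝[<] t₀, τ ∈ Ioo 0 t₀ := by
    filter_upwards [self_mem_nhdsWithin,
      nhdsWithin_le_nhds (Ioi_mem_nhds ht₀)]
      with τ h1 h2
    exact ⟨h2, h1⟩
  have hle' : 𝓝[<] t₀ ≤ 𝓝[Icc 0 t₀] t₀ := by
    apply nhdsWithin_le_of_mem
    rw [← Filter.eventually_mem_set]
    filter_upwards [hmemIcc'] with τ hτ
    exact ⟨hτ.1.le, hτ.2.le⟩
  have hTF : Tendsto (fun τ => ∫ s in (0:ℝ)..τ, h s) (𝓝[<] t₀) (𝓝 (∫ s in (0:ℝ)..t₀, h s)) :=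
    (hprim t₀).tendsto.mono_left hle'
  -- boundary term tends to 0
  have hgt₀ : g t₀ = 0 := by simp [hg]
  have hslope : Tendsto (slope g t₀) (𝓝[<] t₀) (𝓝 (deriv f t₀)) :=
    (hasDerivAt_iff_tendsto_slope.mp (hg_deriv t₀ ⟨ht₀, le_rfl⟩)).mono_left
      (nhdsWithin_mono _ (fun y hy => ne_of_lt hy))
  have hpow : Tendsto (fun τ => (t₀ - τ) ^ (1 - α)) (𝓝[<] t₀) (𝓝 0) := by
    have hbase : Tendsto (fun τ : ℝ => t₀ - τ) (𝓝[<] t₀) (𝓝 0) := by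
      have h1 : Tendsto (fun τ : ℝ => t₀ - τ) (𝓝 t₀) (𝓝 (t₀ - t₀)) :=
        (continuous_const.sub continuous_id).tendsto t₀
      rw [sub_self] at h1
      exact h1.mono_left nhdsWithin_le_nhds
    have houter : Tendsto (fun x : ℝ => x ^ (1 - α)) (𝓝 0) (𝓝 0) := by
      have hca : ContinuousAt (fun x : ℝ => x ^ (1 - α)) 0 :=
        Real.continuousAt_rpow_const 0 (1 - α) (Or.inr (by linarith))
      have := hca.tendsto
      rwa [Real.zero_rpow (by linarith : (1:ℝ) - α ≠ 0)] at this
    exact houter.comp hbase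
  have hbdry : Tendsto (fun τ => (t₀ - τ) ^ (-α) * g τ) (𝓝[<] t₀) (𝓝 0) := by
    have hprod : Tendsto (fun τ => -(t₀ - τ) ^ (1 - α) * slope g t₀ τ) (𝓝[<] t₀)
        (𝓝 (-(0:ℝ) * deriv f t₀)) := (hpow.neg.mul hslope)
    rw [neg_zero, zero_mul] at hprod
    apply Tendsto.congr' _ hprod
    filter_upwards [self_mem_nhdsWithin] with τ hτ
    have hτt : τ < t₀ := hτ
    have hpos : 0 < t₀ - τ := sub_pos.mpr hτt
    rw [slope_def_field, hgt₀, sub_zero]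
    have hr : (t₀ - τ) ^ (1 - α) = (t₀ - τ) ^ (-α) * (t₀ - τ) := by
      rw [← Real.rpow_add_one hpos.ne' (-α)]
      congr 1
      ring
    rw [hr]
    have hne : τ - t₀ ≠ 0 := by intro hc; simp at hτ; linarith
    field_simp
    ring
  have hTrhs' : Tendsto (fun τ => (t₀ - τ) ^ (-α) * g τ - t₀ ^ (-α) * g 0) (𝓝[<] t₀)
      (𝓝 (0 - t₀ ^ (-α) * g 0)) := hbdry.sub tendsto_const_nhds
  have hfinal : (∫ s in (0:ℝ)..t₀, h s) ≤ 0 - t₀ ^ (-α) * g 0 := by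
    apply le_of_tendsto_of_tendsto hTF hTrhs'
    filter_upwards [hmemIcc'] with τ hτ
    exact step2 τ hτ.1 hτ.2
  have hgpos : 0 < g 0 := sub_pos.mpr hstrict
  have : 0 < t₀ ^ (-α) := Real.rpow_pos_of_pos ht₀ _
  calc (∫ s in (0:ℝ)..t₀, (t₀ - s) ^ (-α) * deriv f s) = (∫ s in (0:ℝ)..t₀, h s) := rfl
    _ ≤ 0 - t₀ ^ (-α) * g 0 := hfinal
    _ < 0 := by nlinarith

/-- Minimum principle for the time-fractional Burgers equation. -/
theorem fractional_burgers_min_principle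
    (α ν L T : ℝ) (hα : 0 < α ∧ α < 1) (hν : 0 < ν) (hL : 0 < L) (hT : 0 < T)
    (u : ℝ → ℝ → ℝ) (u₀ : ℝ → ℝ) (m : ℝ)
    (hcont : ContinuousOn (fun p : ℝ × ℝ => u p.1 p.2) (Icc 0 L ×ˢ Ico 0 T))
    (hx : ∀ t ∈ Ioo (0:ℝ) T, ∀ x ∈ Ioo (0:ℝ) L,
      DifferentiableAt ℝ (fun y => u y t) x ∧ DifferentiableAt ℝ (fun y => pdX u y t) x ∧
        ContinuousAt (fun y => pdX (pdX u) y t) x)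
    (ht : ∀ x ∈ Ioo (0:ℝ) L, ∀ t ∈ Ioo (0:ℝ) T,
      DifferentiableAt ℝ (fun s => u x s) t ∧ ContinuousAt (fun s => pdT u x s) t)
    (hcap : ∀ x ∈ Ioo (0:ℝ) L, ∀ t ∈ Ioo (0:ℝ) T,
      IntervalIntegrable (fun s => (t - s) ^ (-α) * deriv (fun r => u x r) s)
        MeasureTheory.volume 0 t)
    (hpde : ∀ x ∈ Ioo (0:ℝ) L, ∀ t ∈ Ioo (0:ℝ) T,
      capT α u x t + u x t * pdX u x t = ν * pdX (pdX u) x t)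
    (hinit : ∀ x ∈ Icc (0:ℝ) L, u x 0 = u₀ x)
    (hm : m = sInf ((fun s => u 0 s) '' Ico (0:ℝ) T ∪ (fun s => u L s) '' Ico (0:ℝ) T ∪ u₀ '' Icc (0:ℝ) L))
    (hbdd : BddBelow ((fun s => u 0 s) '' Ico (0:ℝ) T ∪ (fun s => u L s) '' Ico (0:ℝ) T ∪ u₀ '' Icc (0:ℝ) L)) :
    ∀ x ∈ Icc (0:ℝ) L, ∀ t ∈ Ico (0:ℝ) T, m ≤ u x t := by
  obtain ⟨hα0, hα1⟩ := hα
  intro x hxI t htI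
  have hmle : ∀ z ∈ ((fun s => u 0 s) '' Ico (0:ℝ) T ∪ (fun s => u L s) '' Ico (0:ℝ) T ∪
      u₀ '' Icc (0:ℝ) L), m ≤ z := fun z hz => hm ▸ csInf_le hbdd hz
  set T' : ℝ := (t + T) / 2 with hT'
  have hT'pos : 0 < T' := by simp only [hT']; linarith [htI.1, htI.2]
  have htT' : t ≤ T' := by simp only [hT']; linarith [htI.2]
  have hT'T : T' < T := by simp only [hT']; linarith [htI.2]
  set K : Set (ℝ × ℝ) := Icc (0:ℝ) L ×ˢ Icc (0:ℝ) T' with hK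
  have hKsub : K ⊆ Icc 0 L ×ˢ Ico 0 T :=
    prod_mono subset_rfl (fun s hs => ⟨hs.1, lt_of_le_of_lt hs.2 hT'T⟩)
  have hKc : IsCompact K := isCompact_Icc.prod isCompact_Icc
  have hKne : K.Nonempty := ⟨(0,0), ⟨⟨le_rfl, hL.le⟩, ⟨le_rfl, hT'pos.le⟩⟩⟩
  obtain ⟨p₀, hp₀K, hp₀min⟩ := hKc.exists_isMinOn hKne (hcont.mono hKsub)
  obtain ⟨x₀, t₀⟩ := p₀
  rw [isMinOn_iff] at hp₀min
  have hp₀x : x₀ ∈ Icc (0:ℝ) L := hp₀K.1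
  have hp₀t : t₀ ∈ Icc (0:ℝ) T' := hp₀K.2
  have hmin2 : ∀ y ∈ Icc (0:ℝ) L, ∀ s ∈ Icc (0:ℝ) T', u x₀ t₀ ≤ u y s :=
    fun y hy s hs => hp₀min (y, s) ⟨hy, hs⟩
  suffices hclaim : m ≤ u x₀ t₀ by
    exact hclaim.trans (hmin2 x hxI t ⟨htI.1, htT'⟩)
  by_contra hlt
  push_neg at hlt
  have ht₀T : t₀ < T := lt_of_le_of_lt hp₀t.2 hT'T
  have ht₀Ico : t₀ ∈ Ico (0:ℝ) T := ⟨hp₀t.1, ht₀T⟩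
  have hx₀ne0 : x₀ ≠ 0 := by
    rintro rfl
    exact absurd (hmle _ (Or.inl (Or.inl ⟨t₀, ht₀Ico, rfl⟩))) (not_le.mpr hlt)
  have hx₀neL : x₀ ≠ L := by
    rintro rfl
    exact absurd (hmle _ (Or.inl (Or.inr ⟨t₀, ht₀Ico, rfl⟩))) (not_le.mpr hlt)
  have ht₀ne0 : t₀ ≠ 0 := by
    rintro rfl
    exact absurd (hmle _ (Or.inr ⟨x₀, hp₀x, (hinit x₀ hp₀x).symm⟩)) (not_le.mpr hlt)
  have hx₀Ioo : x₀ ∈ Ioo (0:ℝ) L :=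
    ⟨lt_of_le_of_ne hp₀x.1 (Ne.symm hx₀ne0), lt_of_le_of_ne hp₀x.2 hx₀neL⟩
  have ht₀pos : 0 < t₀ := lt_of_le_of_ne hp₀t.1 (Ne.symm ht₀ne0)
  have ht₀Ioo : t₀ ∈ Ioo (0:ℝ) T := ⟨ht₀pos, ht₀T⟩
  -- spatial derivatives at the interior minimum
  have hpdX0 : pdX u x₀ t₀ = 0 := by
    have hloc : IsLocalMin (fun y => u y t₀) x₀ := by
      filter_upwards [Ioo_mem_nhds hx₀Ioo.1 hx₀Ioo.2] with y hy
      exact hmin2 y (Ioo_subset_Icc_self hy) t₀ hp₀t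
    exact hloc.deriv_eq_zero
  have hpdXX : 0 ≤ pdX (pdX u) x₀ t₀ :=
    second_deriv_nonneg_of_min (f := fun y => u y t₀) (a := 0) (b := L) hx₀Ioo
      (fun y hy => (hx t₀ ht₀Ioo y hy).1)
      ((hx t₀ ht₀Ioo x₀ hx₀Ioo).2.1)
      (fun y hy => hmin2 y (Ioo_subset_Icc_self hy) t₀ hp₀t)
  -- time direction : Caputo derivative is strictly negative
  have hfc : ContinuousOn (fun s => u x₀ s) (Icc 0 t₀) := by
    have hcomp : ContinuousOn ((fun p : ℝ × ℝ => u p.1 p.2) ∘ (fun s : ℝ => (x₀, s)))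
        (Icc 0 t₀) :=
      hcont.comp ((continuous_const.prodMk continuous_id).continuousOn)
        (fun s hs => ⟨hp₀x, ⟨hs.1, lt_of_le_of_lt hs.2 ht₀T⟩⟩)
    exact hcomp
  have hIocsub : Ioc (0:ℝ) t₀ ⊆ Ioo 0 T := fun s hs => ⟨hs.1, lt_of_le_of_lt hs.2 ht₀T⟩
  have hIneg := caputo_integral_neg hα0 hα1 ht₀pos (f := fun s => u x₀ s) hfc
    (fun s hs => (ht x₀ hx₀Ioo s (hIocsub hs)).1)
    (fun s hs => ((ht x₀ hx₀Ioo s (hIocsub hs)).2).continuousWithinAt)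
    (hcap x₀ hx₀Ioo t₀ ht₀Ioo)
    (fun s hs => hmin2 x₀ hp₀x s ⟨hs.1, hs.2.trans hp₀t.2⟩)
    (by
      have h1 : m ≤ u₀ x₀ := hmle _ (Or.inr ⟨x₀, hp₀x, rfl⟩)
      have h2 : u x₀ 0 = u₀ x₀ := hinit x₀ hp₀x
      show u x₀ t₀ < u x₀ 0
      rw [h2]; exact lt_of_lt_of_le hlt h1)
  have hGamma : 0 < Real.Gamma (1 - α) := Real.Gamma_pos_of_pos (by linarith)
  have hcapneg : capT α u x₀ t₀ < 0 := by
    have heq : capT α u x₀ t₀ = (1 / Real.Gamma (1 - α)) *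
        ∫ s in (0:ℝ)..t₀, (t₀ - s) ^ (-α) * deriv (fun r => u x₀ r) s := rfl
    rw [heq]
    exact mul_neg_of_pos_of_neg (by positivity) hIneg
  have hpde₀ := hpde x₀ hx₀Ioo t₀ ht₀Ioo
  rw [hpdX0, mul_zero, add_zero] at hpde₀
  nlinarith [mul_nonneg hν.le hpdXX]
end

section
/- (Maximum principle for the time-fractional Burgers equation.) Let 0 < α < 1, ν > 0, L > 0, T > 0, and let u be continuous on [0,L]×[0,T), twice continuously differentiable in x on (0,L) and continuously differentiable in t on (0,T) such that the Caputo derivative ∂^α_{+0,t}u(x,t) exists, and suppose u satisfies ∂^α_{+0,t}u + u u_x = ν u_{xx} on (0,L)×(0,T) together with u(x,0) = u₀(x). Then for all (x,t) ∈ [0,L]×[0,T), u(x,t) ≤ M, where M is the supremum over the set consisting of the values u(0,s) and u(L,s) for s ∈ [0,T) and u₀(y) for y ∈ [0,L]. -/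
open Set MeasureTheory Filter

/-!
Suppose `u` exceeded `M` somewhere. For a small `ε > 0`, the function `u x t - ε * t` attains its
maximum over a compact rectangle `[0, L] × [0, T']` at a point `(x₀, t₀)` with `0 < x₀ < L` and
`0 < t₀`. There `u_x = 0` and `u_xx ≤ 0`, whereas the Caputo derivative of `u x₀` at `t₀` is
positive. Indeed, integrating by parts on `[0, b]` against the kernel `(t₀ - s) ^ (-α)`, which
increases in `s`, and letting `b → t₀` (the boundary term vanishes because `α < 1`) shows that the
Caputo derivative of a function at a maximum over `[0, t₀]` is nonnegative; the perturbation
`-ε * t` adds a positive amount. This contradicts the equation.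
-/

open Topology

theorem hasDerivAt_sub_rpow_neg {t α s : ℝ} (hs : s < t) :
    HasDerivAt (fun r => (t - r) ^ (-α)) (α * (t - s) ^ (-α - 1)) s := by
  convert ((hasDerivAt_id' s).const_sub t).rpow_const (p := -α) (Or.inl (sub_pos.2 hs).ne')
    using 1
  ring

section CaputoAtMaximum

variable {f : ℝ → ℝ} {t α : ℝ}

theorem sub_mul_rpow_neg_le_integral (hα : 0 ≤ α) (hfc : ContinuousOn f (Icc 0 t))
    (hfd : ∀ s ∈ Ioo 0 t, DifferentiableAt ℝ f s)
    (hint : IntervalIntegrable (fun s => (t - s) ^ (-α) * deriv f s) volume 0 t)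
    (hmax : IsMaxOn f (Icc 0 t) t) {b : ℝ} (hb : b ∈ Ioo 0 t) :
    (f b - f t) * (t - b) ^ (-α) ≤ ∫ s in 0..b, (t - s) ^ (-α) * deriv f s := by
  obtain ⟨hb0, hbt⟩ := hb
  have hsub : Icc 0 b ⊆ Icc 0 t := Icc_subset_Icc_right hbt.le
  have hle : ∀ s ∈ Icc 0 b, f s - f t ≤ 0 := fun s hs => sub_nonpos.2 (hmax (hsub hs))
  have hpos : ∀ s ∈ Icc 0 b, 0 < t - s := fun s hs => by linarith [hs.2]
  have hpow : ∀ p : ℝ, ContinuousOn (fun s => (t - s) ^ p) (Icc 0 b) := fun p s hs =>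
    ((continuousAt_const.sub continuousAt_id).rpow_const
      (Or.inl (hpos s hs).ne')).continuousWithinAt
  have hgap : ContinuousOn (fun s => f s - f t) (Icc 0 b) := (hfc.mono hsub).sub continuousOn_const
  have hmain_int : IntervalIntegrable (fun s => (t - s) ^ (-α) * deriv f s) volume 0 b :=
    hint.mono_set (by rw [uIcc_of_le hb0.le, uIcc_of_le (hb0.trans hbt).le]; exact hsub)
  have hrest_int :
      IntervalIntegrable (fun s => (f s - f t) * (α * (t - s) ^ (-α - 1))) volume 0 b :=
    (hgap.mul (continuousOn_const.mul (hpow _))).intervalIntegrable_of_Icc hb0.le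
  have hderiv : ∀ s ∈ Ioo 0 b, HasDerivAt (fun s => (f s - f t) * (t - s) ^ (-α))
      ((t - s) ^ (-α) * deriv f s + (f s - f t) * (α * (t - s) ^ (-α - 1))) s := fun s hs => by
    have hs' : s < t := hs.2.trans hbt
    exact (((hfd s ⟨hs.1, hs'⟩).hasDerivAt.sub_const (f t)).mul
      (hasDerivAt_sub_rpow_neg (α := α) hs')).congr_deriv (by ring)
  have hftc := intervalIntegral.integral_eq_sub_of_hasDerivAt_of_le hb0.le
    (f := fun s => (f s - f t) * (t - s) ^ (-α)) (hgap.mul (hpow (-α))) hderiv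
    (hmain_int.add hrest_int)
  rw [intervalIntegral.integral_add hmain_int hrest_int] at hftc
  have hrest_nonpos : ∫ s in 0..b, (f s - f t) * (α * (t - s) ^ (-α - 1)) ≤ 0 := by
    simpa using intervalIntegral.integral_mono_on hb0.le hrest_int intervalIntegrable_const
      fun s hs => mul_nonpos_of_nonpos_of_nonneg (hle s hs)
        (mul_nonneg hα (Real.rpow_nonneg (hpos s hs).le _))
  have hinit : (f 0 - f t) * (t - 0) ^ (-α) ≤ 0 :=
    mul_nonpos_of_nonpos_of_nonneg (hle 0 ⟨le_rfl, hb0.le⟩)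
      (Real.rpow_nonneg (hpos 0 ⟨le_rfl, hb0.le⟩).le _)
  linarith

theorem tendsto_sub_mul_rpow_neg_nhdsLT {f' : ℝ} (hf : HasDerivAt f f' t) (hα : α < 1) :
    Tendsto (fun b => (f b - f t) * (t - b) ^ (-α)) (𝓝[<] t) (𝓝 0) := by
  have hslope : Tendsto (slope f t) (𝓝[<] t) (𝓝 f') :=
    (hasDerivAt_iff_tendsto_slope.1 hf).mono_left (nhdsLT_le_nhdsNE t)
  have hpow : Tendsto (fun b => (t - b) ^ (1 - α)) (𝓝[<] t) (𝓝 0) := by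
    have hcont : ContinuousAt (fun b : ℝ => (t - b) ^ (1 - α)) t :=
      (continuousAt_const.sub continuousAt_id).rpow_const (Or.inr (by linarith))
    simpa [Real.zero_rpow (by linarith : 1 - α ≠ 0)] using
      hcont.tendsto.mono_left nhdsWithin_le_nhds
  have := (hslope.mul hpow).neg
  rw [mul_zero, neg_zero] at this
  refine this.congr' ?_
  filter_upwards [self_mem_nhdsWithin] with b (hb : b < t)
  have htb : 0 < t - b := sub_pos.2 hb
  have hbt : b - t ≠ 0 := by linarith
  rw [slope_def_field, show 1 - α = 1 + -α by ring, Real.rpow_add htb, Real.rpow_one]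
  field_simp
  ring

theorem integral_rpow_neg_mul_deriv_nonneg_of_isMaxOn (hα : 0 ≤ α) (hα1 : α < 1) (ht : 0 < t)
    (hfc : ContinuousOn f (Icc 0 t)) (hfd : ∀ s ∈ Ioc 0 t, DifferentiableAt ℝ f s)
    (hint : IntervalIntegrable (fun s => (t - s) ^ (-α) * deriv f s) volume 0 t)
    (hmax : IsMaxOn f (Icc 0 t) t) :
    0 ≤ ∫ s in 0..t, (t - s) ^ (-α) * deriv f s := by
  have hprimitive : Tendsto (fun b => ∫ s in 0..b, (t - s) ^ (-α) * deriv f s) (𝓝[<] t)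
      (𝓝 (∫ s in 0..t, (t - s) ^ (-α) * deriv f s)) := by
    have := intervalIntegral.continuousOn_primitive_interval' hint left_mem_uIcc
    rw [uIcc_of_le ht.le] at this
    exact (this t (right_mem_Icc.2 ht.le)).mono_of_mem_nhdsWithin (Icc_mem_nhdsLT ht)
  refine le_of_tendsto_of_tendsto
    (tendsto_sub_mul_rpow_neg_nhdsLT (hfd t ⟨ht, le_rfl⟩).hasDerivAt hα1) hprimitive ?_
  filter_upwards [Ioo_mem_nhdsLT ht] with b hb
  exact sub_mul_rpow_neg_le_integral hα hfc (fun s hs => hfd s (Ioo_subset_Ioc_self hs))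
    hint hmax hb

theorem caputo_pos_of_isMaxOn_sub_mul {ε : ℝ} (hε : 0 < ε) (hα : 0 < α) (hα1 : α < 1)
    (ht : 0 < t) (hfc : ContinuousOn f (Icc 0 t)) (hfd : ∀ s ∈ Ioc 0 t, DifferentiableAt ℝ f s)
    (hint : IntervalIntegrable (fun s => (t - s) ^ (-α) * deriv f s) volume 0 t)
    (hmax : IsMaxOn (fun s => f s - ε * s) (Icc 0 t) t) :
    0 < caputo α f t := by
  set g := fun s => f s - ε * s
  have hgd : ∀ s ∈ Ioc 0 t, HasDerivAt g (deriv f s - ε) s := fun s hs =>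
    (hfd s hs).hasDerivAt.sub ((hasDerivAt_id' s).const_mul ε |>.congr_deriv (mul_one ε))
  have hsplit : EqOn (fun s => (t - s) ^ (-α) * deriv f s)
      (fun s => (t - s) ^ (-α) * deriv g s + ε * (t - s) ^ (-α)) (uIoo 0 t) := fun s hs => by
    rw [uIoo_of_le ht.le] at hs
    simp only [(hgd s (Ioo_subset_Ioc_self hs)).deriv]
    ring
  have hkernel : IntervalIntegrable (fun s => (t - s) ^ (-α)) volume 0 t := by
    simpa using ((intervalIntegral.intervalIntegrable_rpow' (a := 0) (b := t)
      (by linarith : -1 < -α)).comp_sub_left t).symm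
  have hgint : IntervalIntegrable (fun s => (t - s) ^ (-α) * deriv g s) volume 0 t :=
    (hint.sub (hkernel.const_mul ε)).congr_uIoo fun s hs => by
      simp only [hsplit hs]
      ring
  have hg_nonneg := integral_rpow_neg_mul_deriv_nonneg_of_isMaxOn (f := g) hα.le hα1 ht
    (hfc.sub (continuousOn_const.mul continuousOn_id)) (fun s hs => (hgd s hs).differentiableAt)
    hgint hmax
  have hkernel_pos : 0 < ∫ s in 0..t, ε * (t - s) ^ (-α) :=
    intervalIntegral.intervalIntegral_pos_of_pos_on (hkernel.const_mul ε)
      (fun s hs => mul_pos hε (Real.rpow_pos_of_pos (sub_pos.2 hs.2) _)) ht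
  rw [caputo, intervalIntegral.integral_congr_uIoo hsplit,
    intervalIntegral.integral_add hgint (hkernel.const_mul ε)]
  exact mul_pos (one_div_pos.2 (Real.Gamma_pos_of_pos (by linarith))) (by linarith)

end CaputoAtMaximum

theorem IsLocalMax.deriv_deriv_nonpos {f : ℝ → ℝ} {x₀ : ℝ} (hmax : IsLocalMax f x₀)
    (hc : ContinuousAt f x₀) : deriv (deriv f) x₀ ≤ 0 := by
  by_contra! hpos
  have hmin := isLocalMin_of_deriv_deriv_pos hpos hmax.deriv_eq_zero hc
  have hconst : f =ᶠ[𝓝 x₀] fun _ => f x₀ :=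
    (hmax.and hmin).mono fun _ h => le_antisymm h.1 h.2
  have : deriv (deriv f) x₀ = 0 := by
    rw [hconst.deriv.deriv_eq]
    simp
  exact hpos.ne' this

theorem exists_parabolic_interior_isMaxOn_sub_mul {u : ℝ → ℝ → ℝ} {L T M a b : ℝ}
    (hcont : ContinuousOn (fun p : ℝ × ℝ => u p.1 p.2) (Icc 0 L ×ˢ Ico 0 T))
    (hleft : ∀ s ∈ Ico 0 T, u 0 s ≤ M) (hright : ∀ s ∈ Ico 0 T, u L s ≤ M)
    (hinit : ∀ x ∈ Icc 0 L, u x 0 ≤ M) (ha : a ∈ Icc 0 L) (hb : b ∈ Ico 0 T) (hab : M < u a b) :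
    ∃ ε > 0, ∃ x₀ ∈ Ioo 0 L, ∃ t₀ ∈ Ioo 0 T,
      IsMaxOn (fun y => u y t₀) (Icc 0 L) x₀ ∧ IsMaxOn (fun s => u x₀ s - ε * s) (Icc 0 t₀) t₀ := by
  obtain ⟨T', hbT', hT'T⟩ := exists_between hb.2
  have hT' : 0 < T' := hb.1.trans_lt hbT'
  set ε := (u a b - M) / (2 * T')
  have hε : 0 < ε := div_pos (by linarith) (by linarith)
  have hεT' : ε * T' < u a b - M := by
    rw [div_mul_eq_mul_div, div_lt_iff₀ (by linarith)]
    nlinarith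
  have hK : Icc 0 L ×ˢ Icc 0 T' ⊆ Icc 0 L ×ˢ Ico 0 T :=
    prod_mono_right (Icc_subset_Ico_right hT'T)
  obtain ⟨⟨x₀, t₀⟩, ⟨hx₀, ht₀⟩, hmax⟩ := (isCompact_Icc.prod isCompact_Icc).exists_isMaxOn
    (f := fun p : ℝ × ℝ => u p.1 p.2 - ε * p.2) ⟨(a, b), ha, hb.1, hbT'.le⟩
    ((hcont.mono hK).sub (continuous_const.mul continuous_snd).continuousOn)
  rw [isMaxOn_iff] at hmax
  have hM : M < u x₀ t₀ - ε * t₀ := by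
    have := hmax (a, b) ⟨ha, hb.1, hbT'.le⟩
    have := mul_le_mul_of_nonneg_left hbT'.le hε.le
    dsimp only at *
    linarith
  have hεt₀ : 0 ≤ ε * t₀ := mul_nonneg hε.le ht₀.1
  have ht₀T : t₀ ∈ Ico 0 T := ⟨ht₀.1, ht₀.2.trans_lt hT'T⟩
  refine ⟨ε, hε, x₀, ⟨?_, ?_⟩, t₀, ⟨?_, ht₀T.2⟩, fun y hy => ?_, fun s hs => ?_⟩
  · refine hx₀.1.lt_of_ne fun h => ?_
    linarith [h ▸ hleft t₀ ht₀T]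
  · refine hx₀.2.lt_of_ne fun h => ?_
    linarith [h ▸ hright t₀ ht₀T]
  · refine ht₀.1.lt_of_ne fun h => ?_
    subst h
    linarith [hinit x₀ hx₀]
  · show u y t₀ ≤ u x₀ t₀
    linarith [hmax (y, t₀) ⟨hy, ht₀⟩]
  · exact hmax (x₀, s) ⟨hx₀, hs.1, hs.2.trans ht₀.2⟩

theorem fractional_burgers_max_principle_general
    (α ν L T : ℝ) (hα : 0 < α ∧ α < 1) (hν : 0 < ν)
    (u : ℝ → ℝ → ℝ) (u₀ : ℝ → ℝ) (M : ℝ)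
    (hcont : ContinuousOn (fun p : ℝ × ℝ => u p.1 p.2) (Icc 0 L ×ˢ Ico 0 T))
    (hx : ∀ t ∈ Ioo (0:ℝ) T, ∀ x ∈ Ioo (0:ℝ) L,
      DifferentiableAt ℝ (fun y => u y t) x ∧ DifferentiableAt ℝ (fun y => pdX u y t) x ∧
        ContinuousAt (fun y => pdX (pdX u) y t) x)
    (ht : ∀ x ∈ Ioo (0:ℝ) L, ∀ t ∈ Ioo (0:ℝ) T,
      DifferentiableAt ℝ (fun s => u x s) t ∧ ContinuousAt (fun s => pdT u x s) t)
    (hcap : ∀ x ∈ Ioo (0:ℝ) L, ∀ t ∈ Ioo (0:ℝ) T,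
      IntervalIntegrable (fun s => (t - s) ^ (-α) * deriv (fun r => u x r) s)
        MeasureTheory.volume 0 t)
    (hpde : ∀ x ∈ Ioo (0:ℝ) L, ∀ t ∈ Ioo (0:ℝ) T,
      capT α u x t + u x t * pdX u x t = ν * pdX (pdX u) x t)
    (hinit : ∀ x ∈ Icc (0:ℝ) L, u x 0 = u₀ x)
    (hM : M = sSup ((fun s => u 0 s) '' Ico (0:ℝ) T ∪ (fun s => u L s) '' Ico (0:ℝ) T ∪ u₀ '' Icc (0:ℝ) L))
    (hbdd : BddAbove ((fun s => u 0 s) '' Ico (0:ℝ) T ∪ (fun s => u L s) '' Ico (0:ℝ) T ∪ u₀ '' Icc (0:ℝ) L)) :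
    ∀ x ∈ Icc (0:ℝ) L, ∀ t ∈ Ico (0:ℝ) T, u x t ≤ M := by
  have hbound := fun y (hy : y ∈ _) => hM ▸ le_csSup hbdd hy
  by_contra! ⟨a, ha, b, hb, hab⟩
  obtain ⟨ε, hε, x₀, hx₀, t₀, ht₀, hspace, htime⟩ := exists_parabolic_interior_isMaxOn_sub_mul hcont
    (fun s hs => hbound _ (Or.inl (Or.inl ⟨s, hs, rfl⟩)))
    (fun s hs => hbound _ (Or.inl (Or.inr ⟨s, hs, rfl⟩)))
    (fun x hx => hinit x hx ▸ hbound _ (Or.inr ⟨x, hx, rfl⟩)) ha hb hab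
  have hlocal : IsLocalMax (fun y => u y t₀) x₀ := hspace.isLocalMax (Icc_mem_nhds hx₀.1 hx₀.2)
  have hux : pdX u x₀ t₀ = 0 := hlocal.deriv_eq_zero
  have huxx : pdX (pdX u) x₀ t₀ ≤ 0 :=
    hlocal.deriv_deriv_nonpos (hx t₀ ht₀ x₀ hx₀).1.continuousAt
  have hut : 0 < capT α u x₀ t₀ := caputo_pos_of_isMaxOn_sub_mul hε hα.1 hα.2 ht₀.1
    (hcont.comp (continuousOn_const.prodMk continuousOn_id)
      fun s hs => ⟨Ioo_subset_Icc_self hx₀, hs.1, hs.2.trans_lt ht₀.2⟩)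
    (fun s hs => (ht x₀ hx₀ s ⟨hs.1, hs.2.trans_lt ht₀.2⟩).1) (hcap x₀ hx₀ t₀ ht₀) htime
  have hequation := hpde x₀ hx₀ t₀ ht₀
  rw [hux, mul_zero, add_zero] at hequation
  linarith [mul_nonpos_of_nonneg_of_nonpos hν.le huxx]

/-- Maximum principle for the time-fractional Burgers equation. -/
theorem fractional_burgers_max_principle
    (α ν L T : ℝ) (hα : 0 < α ∧ α < 1) (hν : 0 < ν) (hL : 0 < L) (hT : 0 < T)
    (u : ℝ → ℝ → ℝ) (u₀ : ℝ → ℝ) (M : ℝ)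
    (hcont : ContinuousOn (fun p : ℝ × ℝ => u p.1 p.2) (Icc 0 L ×ˢ Ico 0 T))
    (hx : ∀ t ∈ Ioo (0:ℝ) T, ∀ x ∈ Ioo (0:ℝ) L,
      DifferentiableAt ℝ (fun y => u y t) x ∧ DifferentiableAt ℝ (fun y => pdX u y t) x ∧
        ContinuousAt (fun y => pdX (pdX u) y t) x)
    (ht : ∀ x ∈ Ioo (0:ℝ) L, ∀ t ∈ Ioo (0:ℝ) T,
      DifferentiableAt ℝ (fun s => u x s) t ∧ ContinuousAt (fun s => pdT u x s) t)
    (hcap : ∀ x ∈ Ioo (0:ℝ) L, ∀ t ∈ Ioo (0:ℝ) T,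
      IntervalIntegrable (fun s => (t - s) ^ (-α) * deriv (fun r => u x r) s)
        MeasureTheory.volume 0 t)
    (hpde : ∀ x ∈ Ioo (0:ℝ) L, ∀ t ∈ Ioo (0:ℝ) T,
      capT α u x t + u x t * pdX u x t = ν * pdX (pdX u) x t)
    (hinit : ∀ x ∈ Icc (0:ℝ) L, u x 0 = u₀ x)
    (hM : M = sSup ((fun s => u 0 s) '' Ico (0:ℝ) T ∪ (fun s => u L s) '' Ico (0:ℝ) T ∪ u₀ '' Icc (0:ℝ) L))
    (hbdd : BddAbove ((fun s => u 0 s) '' Ico (0:ℝ) T ∪ (fun s => u L s) '' Ico (0:ℝ) T ∪ u₀ '' Icc (0:ℝ) L)) :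
    ∀ x ∈ Icc (0:ℝ) L, ∀ t ∈ Ico (0:ℝ) T, u x t ≤ M :=
  fractional_burgers_max_principle_general α ν L T hα hν u u₀ M hcont hx ht hcap hpde hinit hM hbdd
end
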